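/- arXiv:2308.06166 — 6 statements merged into one kernel-verified Lean document; each statement's English description precedes it below -/
import Mathlib

section
/- Let ρ(x) = Π_{j: c_j ≤ a} (x−c_j)^{d_j+1} · Π_{j: c_j ≥ b} (c_j−x)^{d_j+1} and d = Σ_{j=1}^N (d_j+1). If n > d, then ∫ S_n(x) f(x) ρ(x) dμ(x) = 0 for every real polynomial f with deg f ≤ n−d−1 (i.e., S_n is quasi-orthogonal of order d with respect to ρ dμ), and consequently S_n has at least n−d sign changes in (a,b). -/
/-!
For `deg f ≤ n - d - 1` the polynomial `f ρ` has degree `< n` and vanishes to order `d_j + 1` at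
each `c_j`, so the discrete part of `⟨f ρ, S_n⟩_s` drops out and `∫ S_n f ρ dμ = ⟨f ρ, S_n⟩_s = 0`.
If `S_n` had fewer than `n - d` sign changes in `(a, b)`, then with `f = ∏ (x - ξ)` over them the
polynomial `S_n f ρ` would have no sign change on `(a, b)` (`ρ` has no zeros there), hence constant
sign on `[a, b] ⊇ supp μ`; as `supp μ` is infinite, its integral could not vanish.
-/

open MeasureTheory Polynomial

/-- The support of a Borel measure on `ℝ`. -/
def mSupport (μ : Measure ℝ) : Set ℝ := {x | ∀ U ∈ nhds x, 0 < μ U}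

/-- The discrete Sobolev-type inner product. -/
noncomputable def sobolevIP (μ : Measure ℝ) {N : ℕ} (c : Fin N → ℝ) (d : Fin N → ℕ)
    (lam : Fin N → ℕ → ℝ) (f g : Polynomial ℝ) : ℝ :=
  (∫ x, f.eval x * g.eval x ∂μ) +
    ∑ j : Fin N, ∑ k ∈ Finset.range (d j + 1),
      lam j k * ((derivative^[k] f).eval (c j)) * ((derivative^[k] g).eval (c j))

-- The polynomial `ρ(x) = Π_{j : c_j ≤ a} (x - c_j)^{d_j+1} · Π_{j : c_j ≥ b} (c_j - x)^{d_j+1}`,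
-- where `E = (a,b)` is the interior of the convex hull of the support of the measure.
open Classical in
noncomputable def rhoPoly (E : Set ℝ) {N : ℕ} (c : Fin N → ℝ) (d : Fin N → ℕ) : Polynomial ℝ :=
  ∏ j : Fin N,
    if ∀ x ∈ E, c j ≤ x then (X - C (c j)) ^ (d j + 1) else (C (c j) - X) ^ (d j + 1)

open Set

lemma mSupport_eq_support (μ : Measure ℝ) : mSupport μ = μ.support :=
  Set.ext fun x => (Measure.mem_support_iff_forall x).symm

lemma integral_pos_of_nonneg_on_mSupport {μ : Measure ℝ} {f : ℝ → ℝ} (hf : Continuous f)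
    (hfi : Integrable f μ) (hnn : ∀ x ∈ mSupport μ, 0 ≤ f x) {x₀ : ℝ} (hx₀ : x₀ ∈ mSupport μ)
    (hfx₀ : f x₀ ≠ 0) : 0 < ∫ x, f x ∂μ := by
  have hae : 0 ≤ᵐ[μ] f := by
    filter_upwards [mSupport_eq_support μ ▸ Measure.support_mem_ae (μ := μ)] with x hx
    exact hnn x hx
  rw [integral_pos_iff_support_of_nonneg_ae hae hfi]
  exact hx₀ _ ((isOpen_ne_fun hf continuous_const).mem_nhds hfx₀)

lemma integrable_eval_of_integrable_pow {μ : Measure ℝ}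
    (hmom : ∀ k : ℕ, Integrable (fun x => x ^ k) μ) (p : ℝ[X]) :
    Integrable (fun x => p.eval x) μ := by
  simp_rw [eval_eq_sum_range]
  exact integrable_finsetSum _ fun k _ => (hmom k).const_mul _

lemma subset_closure_interior_convexHull {s : Set ℝ} (hs : s.Nontrivial) :
    s ⊆ closure (interior (convexHull ℝ s)) := by
  obtain ⟨x, hx, y, hy, hxy⟩ := hs
  have hint : (interior (convexHull ℝ s)).Nonempty := by
    have : Ioo (min x y) (max x y) ⊆ interior (convexHull ℝ s) := by
      rw [← interior_Icc]
      exact interior_mono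
        ((segment_eq_uIcc x y).symm.subset.trans (segment_subset_convexHull hx hy))
    exact (nonempty_Ioo.2 (min_lt_max.2 hxy)).mono this
  rw [(convex_convexHull ℝ s).closure_interior_eq_closure_of_nonempty_interior hint]
  exact (subset_convexHull ℝ s).trans subset_closure

section SobolevInnerProduct

variable {μ : Measure ℝ} {N : ℕ} (c : Fin N → ℝ) (d : Fin N → ℕ) (lam : Fin N → ℕ → ℝ)

lemma sobolevIP_add_left (hmom : ∀ k : ℕ, Integrable (fun x => x ^ k) μ) (f g S : ℝ[X]) :
    sobolevIP μ c d lam (f + g) S = sobolevIP μ c d lam f S + sobolevIP μ c d lam g S := by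
  have hint : ∀ p : ℝ[X], Integrable (fun x => p.eval x * S.eval x) μ := fun p => by
    simpa using integrable_eval_of_integrable_pow hmom (p * S)
  simp only [sobolevIP, iterate_map_add, eval_add, add_mul, mul_add, integral_add (hint f) (hint g),
    Finset.sum_add_distrib]
  ring

lemma sobolevIP_C_mul_left (a : ℝ) (f S : ℝ[X]) :
    sobolevIP μ c d lam (C a * f) S = a * sobolevIP μ c d lam f S := by
  simp only [sobolevIP, iterate_derivative_C_mul, eval_mul, eval_C, mul_assoc, integral_const_mul,
    Finset.mul_sum, mul_add]
  congr 1
  refine Finset.sum_congr rfl fun j _ => Finset.sum_congr rfl fun k _ => ?_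
  ring

lemma sobolevIP_eq_zero_of_natDegree_lt (hmom : ∀ k : ℕ, Integrable (fun x => x ^ k) μ)
    {n : ℕ} {g S : ℝ[X]} (hS : ∀ k < n, sobolevIP μ c d lam (X ^ k) S = 0)
    (hg : g.natDegree < n) : sobolevIP μ c d lam g S = 0 := by
  let L : ℝ[X] →+ ℝ :=
    AddMonoidHom.mk' (sobolevIP μ c d lam · S) (sobolevIP_add_left c d lam hmom · · S)
  change L g = 0
  rw [g.as_sum_range_C_mul_X_pow' hg, map_sum]
  refine Finset.sum_eq_zero fun k hk => ?_
  simp [L, sobolevIP_C_mul_left, hS k (Finset.mem_range.1 hk)]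

lemma eval_iterate_derivative_eq_zero_of_pow_dvd {R : Type*} [CommRing R] {p : R[X]} {a : R}
    {m k : ℕ} (h : (X - C a) ^ m ∣ p) (hk : k < m) : (derivative^[k] p).eval a = 0 :=
  dvd_iff_isRoot.mp <|
    (dvd_pow_self _ (Nat.sub_ne_zero_of_lt hk)).trans
      (pow_sub_dvd_iterate_derivative_of_pow_dvd k h)

lemma sobolevIP_eq_integral_of_pow_dvd {g : ℝ[X]} (hg : ∀ j, (X - C (c j)) ^ (d j + 1) ∣ g)
    (S : ℝ[X]) : sobolevIP μ c d lam g S = ∫ x, g.eval x * S.eval x ∂μ := by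
  rw [sobolevIP, add_eq_left]
  refine Finset.sum_eq_zero fun j _ => Finset.sum_eq_zero fun k hk => ?_
  rw [eval_iterate_derivative_eq_zero_of_pow_dvd (hg j) (Finset.mem_range.1 hk), mul_zero,
    zero_mul]

end SobolevInnerProduct

section rhoPoly

variable {N : ℕ} (E : Set ℝ) (c : Fin N → ℝ) (d : Fin N → ℕ)

lemma natDegree_rhoPoly_le : (rhoPoly E c d).natDegree ≤ ∑ j, (d j + 1) := by
  refine (natDegree_prod_le _ _).trans (Finset.sum_le_sum fun j _ => ?_)
  split_ifs <;> compute_degree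

lemma pow_dvd_rhoPoly (j : Fin N) : (X - C (c j)) ^ (d j + 1) ∣ rhoPoly E c d := by
  refine dvd_trans ?_ (Finset.dvd_prod_of_mem _ (Finset.mem_univ j))
  split_ifs
  · rfl
  · rw [← neg_sub X, neg_pow]
    exact dvd_mul_left _ _

lemma eval_rhoPoly_ne_zero {ξ : ℝ} (hξ : ξ ∉ range c) : (rhoPoly E c d).eval ξ ≠ 0 := by
  rw [rhoPoly, eval_prod]
  refine Finset.prod_ne_zero_iff.2 fun j _ => ?_
  have hne : c j ≠ ξ := fun h => hξ ⟨j, h⟩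
  split_ifs <;> simp [sub_eq_zero, hne, hne.symm]

end rhoPoly

theorem integral_mul_rhoPoly_eq_zero {μ : Measure ℝ} (E : Set ℝ) {N : ℕ} (c : Fin N → ℝ)
    (d : Fin N → ℕ) (lam : Fin N → ℕ → ℝ) (hmom : ∀ k : ℕ, Integrable (fun x => x ^ k) μ)
    {n : ℕ} {S : ℝ[X]} (hS : ∀ k < n, sobolevIP μ c d lam (X ^ k) S = 0) {f : ℝ[X]}
    (hf : f.natDegree + ∑ j, (d j + 1) < n) :
    ∫ x, S.eval x * f.eval x * (rhoPoly E c d).eval x ∂μ = 0 := by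
  have hdeg : (f * rhoPoly E c d).natDegree < n := by
    have := natDegree_mul_le (p := f) (q := rhoPoly E c d)
    have := natDegree_rhoPoly_le E c d
    omega
  have hdvd : ∀ j, (X - C (c j)) ^ (d j + 1) ∣ f * rhoPoly E c d :=
    fun j => dvd_mul_of_dvd_right (pow_dvd_rhoPoly E c d j) f
  rw [← sobolevIP_eq_zero_of_natDegree_lt c d lam hmom hS hdeg,
    sobolevIP_eq_integral_of_pow_dvd c d lam hdvd]
  simp only [eval_mul]
  congr 1 with x
  ring

open Classical in
noncomputable def signChanges (p : ℝ[X]) (E : Set ℝ) : Finset ℝ :=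
  {ξ ∈ p.roots.toFinset | ξ ∈ E ∧ Odd (p.rootMultiplicity ξ)}

lemma mem_signChanges {p : ℝ[X]} {E : Set ℝ} {ξ : ℝ} :
    ξ ∈ signChanges p E ↔ ξ ∈ E ∧ Odd (p.rootMultiplicity ξ) := by
  simp only [signChanges, Finset.mem_filter, Multiset.mem_toFinset, mem_roots',
    and_iff_right_iff_imp]
  exact fun h => rootMultiplicity_pos'.1 h.2.pos

lemma rootMultiplicity_prod_X_sub_C {R : Type*} [CommRing R] [IsDomain R] [DecidableEq R]
    (s : Finset R) (a : R) :
    rootMultiplicity a (∏ t ∈ s, (X - C t)) = if a ∈ s then 1 else 0 := by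
  rw [← count_roots, roots_prod_X_sub_C, Multiset.count_eq_of_nodup s.nodup]
  simp only [Finset.mem_val]

lemma even_rootMultiplicity_mul_prod_signChanges {p : ℝ[X]} (hp : p ≠ 0) {E : Set ℝ} {ξ : ℝ}
    (hξ : ξ ∈ E) : Even (rootMultiplicity ξ (p * ∏ t ∈ signChanges p E, (X - C t))) := by
  classical
  have hprod : (∏ t ∈ signChanges p E, (X - C t)).Monic :=
    monic_prod_of_monic _ _ fun t _ => monic_X_sub_C t
  rw [rootMultiplicity_mul (mul_ne_zero hp hprod.ne_zero), rootMultiplicity_prod_X_sub_C]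
  by_cases hodd : Odd (p.rootMultiplicity ξ)
  · rw [if_pos (mem_signChanges.2 ⟨hξ, hodd⟩)]
    exact hodd.add_one
  · rw [if_neg fun h => hodd (mem_signChanges.1 h).2, add_zero]
    exact Nat.not_odd_iff_even.1 hodd

theorem exists_odd_rootMultiplicity_of_eval_mul_neg {x y : ℝ} (hxy : x < y) {p : ℝ[X]}
    (hp : p.eval x * p.eval y < 0) : ∃ z ∈ Ioo x y, Odd (p.rootMultiplicity z) := by
  induction hn : p.natDegree using Nat.strong_induction_on generalizing p with
  | _ n ih =>
  have hp0 : p ≠ 0 := by rintro rfl; simp at hp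
  obtain ⟨z, hz, hpz⟩ : ∃ z ∈ Ioo x y, p.IsRoot z := by
    have hcont := p.continuous.continuousOn (s := Icc x y)
    rcases mul_neg_iff.1 hp with ⟨hx, hy⟩ | ⟨hx, hy⟩
    · exact intermediate_value_Ioo' hxy.le hcont ⟨hy, hx⟩
    · exact intermediate_value_Ioo hxy.le hcont ⟨hx, hy⟩
  -- A root of even multiplicity can be divided out without changing the signs at `x` and `y`.
  obtain ⟨q, hpq, -⟩ := p.exists_eq_pow_rootMultiplicity_mul_and_not_dvd hp0 z
  set k := p.rootMultiplicity z
  obtain hk | hk := Nat.even_or_odd k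
  swap
  · exact ⟨z, hz, hk⟩
  have hq0 : q ≠ 0 := right_ne_zero_of_mul (hpq ▸ hp0)
  have hqn : q.natDegree < n := by
    have hk0 : 0 < k := (rootMultiplicity_pos hp0).2 hpz
    have := congrArg natDegree hpq
    rw [natDegree_mul (pow_ne_zero _ (X_sub_C_ne_zero z)) hq0, natDegree_pow,
      natDegree_X_sub_C] at this
    omega
  have hq : q.eval x * q.eval y < 0 := by
    have hpos : 0 < ((x - z) * (y - z)) ^ k :=
      hk.pow_pos (mul_ne_zero (sub_ne_zero.2 hz.1.ne) (sub_ne_zero.2 hz.2.ne'))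
    have hfac : p.eval x * p.eval y = ((x - z) * (y - z)) ^ k * (q.eval x * q.eval y) := by
      rw [hpq]
      simp only [eval_mul, eval_pow, eval_sub, eval_X, eval_C, mul_pow]
      ring
    rw [hfac] at hp
    exact neg_of_mul_neg_right hp hpos.le
  obtain ⟨z', hz', hodd⟩ := ih _ hqn hq rfl
  refine ⟨z', hz', ?_⟩
  rw [hpq, rootMultiplicity_mul (hpq ▸ hp0), ← count_roots, roots_pow, roots_X_sub_C,
    Multiset.count_nsmul]
  exact (hk.mul_right _).add_odd hodd

lemma eval_mul_eval_nonneg_of_even_rootMultiplicity {p : ℝ[X]} {E : Set ℝ} (hE : E.OrdConnected)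
    (heven : ∀ z ∈ E, Even (p.rootMultiplicity z)) {x y : ℝ} (hx : x ∈ E) (hy : y ∈ E) :
    0 ≤ p.eval x * p.eval y := by
  wlog hxy : x ≤ y generalizing x y
  · rw [mul_comm]
    exact this hy hx (le_of_not_ge hxy)
  obtain rfl | hlt := hxy.eq_or_lt
  · exact mul_self_nonneg _
  by_contra! hneg
  obtain ⟨z, hz, hodd⟩ := exists_odd_rootMultiplicity_of_eval_mul_neg hlt hneg
  exact Nat.not_even_iff_odd.2 hodd (heven z (hE.out hx hy (Ioo_subset_Icc_self hz)))

lemma integral_eval_ne_zero_of_eval_mul_nonneg {μ : Measure ℝ}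
    (hmom : ∀ k : ℕ, Integrable (fun x => x ^ k) μ) (hsupp : (mSupport μ).Infinite)
    {E : Set ℝ} (hsub : mSupport μ ⊆ closure E) {p : ℝ[X]} (hp : p ≠ 0)
    (hsign : ∀ x ∈ E, ∀ y ∈ E, 0 ≤ p.eval x * p.eval y) : ∫ x, p.eval x ∂μ ≠ 0 := by
  have hsign' : ∀ x ∈ closure E, ∀ y ∈ closure E, 0 ≤ p.eval x * p.eval y := by
    intro x hx y hy
    have : closure (E ×ˢ E) ⊆ {q : ℝ × ℝ | 0 ≤ p.eval q.1 * p.eval q.2} :=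
      closure_minimal (fun q hq => hsign _ hq.1 _ hq.2) (isClosed_le continuous_const
        ((p.continuous.comp continuous_fst).mul (p.continuous.comp continuous_snd)))
    exact this (show (x, y) ∈ closure (E ×ˢ E) by rw [closure_prod_eq]; exact ⟨hx, hy⟩)
  obtain ⟨x₀, hx₀, hpx₀⟩ := (hsupp.sdiff (finite_setOfPred_isRoot hp)).nonempty
  have hpos := integral_pos_of_nonneg_on_mSupport (f := fun y => p.eval x₀ * p.eval y)
    (by fun_prop) ((integrable_eval_of_integrable_pow hmom p).const_mul _)
    (fun y hy => hsign' _ (hsub hx₀) _ (hsub hy)) hx₀ (mul_self_ne_zero.2 hpx₀)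
  rw [integral_const_mul] at hpos
  intro h0
  simp [h0] at hpos

theorem le_card_signChanges_of_integral_mul_eq_zero {μ : Measure ℝ}
    (hmom : ∀ k : ℕ, Integrable (fun x => x ^ k) μ) (hsupp : (mSupport μ).Infinite)
    {E : Set ℝ} (hE : E.OrdConnected) (hsub : mSupport μ ⊆ closure E) {ρ S : ℝ[X]}
    (hρ : ∀ ξ ∈ E, ρ.eval ξ ≠ 0) (hS : S ≠ 0) {m : ℕ}
    (horth : ∀ f : ℝ[X], f.natDegree < m → ∫ x, S.eval x * f.eval x * ρ.eval x ∂μ = 0) :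
    m ≤ (signChanges S E).card := by
  by_contra! hcard
  set f := ∏ t ∈ signChanges S E, (X - C t)
  have hf : f.Monic := monic_prod_of_monic _ _ fun t _ => monic_X_sub_C t
  have hρ0 : ρ ≠ 0 := by
    obtain ⟨ξ, hξ⟩ := closure_nonempty_iff.1 (hsupp.nonempty.mono hsub)
    rintro rfl
    exact hρ ξ hξ eval_zero
  have hh0 : S * f * ρ ≠ 0 := mul_ne_zero (mul_ne_zero hS hf.ne_zero) hρ0
  have heven : ∀ ξ ∈ E, Even ((S * f * ρ).rootMultiplicity ξ) := by
    intro ξ hξ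
    rw [rootMultiplicity_mul hh0, rootMultiplicity_eq_zero (hρ ξ hξ), add_zero]
    exact even_rootMultiplicity_mul_prod_signChanges hS hξ
  refine integral_eval_ne_zero_of_eval_mul_nonneg hmom hsupp hsub hh0
    (fun x hx y hy => eval_mul_eval_nonneg_of_even_rootMultiplicity hE heven hx hy) ?_
  have hfdeg : f.natDegree < m := by
    rwa [natDegree_prod_of_monic _ _ fun t _ => monic_X_sub_C t, Finset.sum_congr rfl
      fun t _ => natDegree_X_sub_C t, Finset.sum_const, smul_eq_mul, mul_one]
  simpa only [eval_mul] using horth f hfdeg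

theorem stmt1_general (μ : Measure ℝ)
    (hmom : ∀ k : ℕ, Integrable (fun x => x ^ k) μ)
    (hsupp : (mSupport μ).Infinite)
    {N : ℕ} (c : Fin N → ℝ) (d : Fin N → ℕ) (lam : Fin N → ℕ → ℝ)
    (hcout : ∀ j, c j ∉ interior (convexHull ℝ (mSupport μ)))
    (n : ℕ) (S : Polynomial ℝ)
    (hS : S.Monic ∧ S.natDegree = n ∧ ∀ k < n, sobolevIP μ c d lam (X ^ k) S = 0)
    (hn : (∑ j : Fin N, (d j + 1)) < n) :
    (∀ f : Polynomial ℝ, f.natDegree ≤ n - (∑ j : Fin N, (d j + 1)) - 1 →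
      ∫ x, S.eval x * f.eval x *
        (rhoPoly (interior (convexHull ℝ (mSupport μ))) c d).eval x ∂μ = 0) ∧
    ∃ T : Finset ℝ, ↑T ⊆ interior (convexHull ℝ (mSupport μ)) ∧
      n - (∑ j : Fin N, (d j + 1)) ≤ T.card ∧
      ∀ ξ ∈ T, Odd (S.rootMultiplicity ξ) := by
  obtain ⟨hmonic, -, horth⟩ := hS
  set E := interior (convexHull ℝ (mSupport μ))
  have hquasi : ∀ f : ℝ[X], f.natDegree < n - ∑ j, (d j + 1) →
      ∫ x, S.eval x * f.eval x * (rhoPoly E c d).eval x ∂μ = 0 :=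
    fun f hf => integral_mul_rhoPoly_eq_zero E c d lam hmom horth (by omega)
  refine ⟨fun f hf => hquasi f (by omega), signChanges S E,
    fun ξ hξ => (mem_signChanges.1 hξ).1, ?_, fun ξ hξ => (mem_signChanges.1 hξ).2⟩
  exact le_card_signChanges_of_integral_mul_eq_zero hmom hsupp
    (convex_convexHull ℝ _).interior.ordConnected
    (subset_closure_interior_convexHull hsupp.nontrivial)
    (fun ξ hξ => eval_rhoPoly_ne_zero E c d fun ⟨j, hj⟩ => hcout j (hj ▸ hξ)) hmonic.ne_zero hquasi

theorem stmt1 (μ : Measure ℝ) [IsFiniteMeasure μ]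
    (hmom : ∀ k : ℕ, Integrable (fun x => x ^ k) μ)
    (hsupp : (mSupport μ).Infinite)
    {N : ℕ} (c : Fin N → ℝ) (d : Fin N → ℕ) (lam : Fin N → ℕ → ℝ)
    (hdmono : Monotone d)
    (hcdist : Function.Injective c)
    (hcout : ∀ j, c j ∉ interior (convexHull ℝ (mSupport μ)))
    (hlam : ∀ j k, k ≤ d j → 0 ≤ lam j k)
    (hlamd : ∀ j, 0 < lam j (d j))
    (n : ℕ) (S : Polynomial ℝ)
    (hS : S.Monic ∧ S.natDegree = n ∧ ∀ k < n, sobolevIP μ c d lam (X ^ k) S = 0)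
    (hn : (∑ j : Fin N, (d j + 1)) < n) :
    (∀ f : Polynomial ℝ, f.natDegree ≤ n - (∑ j : Fin N, (d j + 1)) - 1 →
      ∫ x, S.eval x * f.eval x *
        (rhoPoly (interior (convexHull ℝ (mSupport μ))) c d).eval x ∂μ = 0) ∧
    ∃ T : Finset ℝ, ↑T ⊆ interior (convexHull ℝ (mSupport μ)) ∧
      n - (∑ j : Fin N, (d j + 1)) ≤ T.card ∧
      ∀ ξ ∈ T, Odd (S.rootMultiplicity ξ) :=
  stmt1_general μ hmom hsupp c d lam hcout n S hS hn
end

section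
/- Let I ⊂ ℝ be an interval, let J be a closed subinterval of the interior of I (J may be empty or a single point), and let P be a real polynomial of degree ≥ 1. Then N(P;J) + N°(P; I∖J) ≤ N(P′;J) + N°(P′; int(I)∖J) + 1, where P′ is the derivative of P. -/
open Polynomial

-- `NZ P A`: number of zeros of `P` in `A`, counted with multiplicity.
open Classical in
noncomputable def NZ (P : Polynomial ℝ) (A : Set ℝ) : ℕ :=
  Multiset.card (P.roots.filter (· ∈ A))

-- `ND P A`: number of distinct zeros of `P` in `A` (without multiplicities).
open Classical in
noncomputable def ND (P : Polynomial ℝ) (A : Set ℝ) : ℕ :=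
  (P.roots.toFinset.filter (· ∈ A)).card

lemma sum_count_le (t : Finset ℝ) (s : Multiset ℝ) :
    ∑ x ∈ t, s.count x ≤ Multiset.card s := by
  classical
  have h1 : ∑ x ∈ t, s.count x = ∑ x ∈ t ∩ s.toFinset, s.count x := by
    refine (Finset.sum_subset Finset.inter_subset_left ?_).symm
    intro x hx hx'
    rw [Multiset.count_eq_zero]
    exact fun hmem => hx' (Finset.mem_inter.mpr ⟨hx, Multiset.mem_toFinset.mpr hmem⟩)
  rw [h1, ← Multiset.toFinset_sum_count_eq]
  exact Finset.sum_le_sum_of_subset Finset.inter_subset_right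

lemma card_filter_eq_sum (s : Multiset ℝ) (p : ℝ → Prop) [DecidablePred p] :
    Multiset.card (s.filter p) = ∑ x ∈ s.toFinset.filter p, s.count x := by
  classical
  rw [← Multiset.toFinset_sum_count_eq, Multiset.toFinset_filter]
  refine Finset.sum_congr rfl fun x hx => ?_
  rw [Multiset.count_filter, if_pos (Finset.mem_filter.mp hx).2]

theorem stmt2 (I J : Set ℝ) (hI : I.OrdConnected) (hJ : J.OrdConnected)
    (hJclosed : IsClosed J) (hJI : J ⊆ interior I)
    (P : Polynomial ℝ) (hP : 1 ≤ P.natDegree) :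
    NZ P J + ND P (I \ J) ≤
      NZ (derivative P) J + ND (derivative P) (interior I \ J) + 1 := by
  classical
  have hP0 : P ≠ 0 := fun h => by simp [h] at hP
  have hP' : derivative P ≠ 0 := by
    intro h
    have := natDegree_eq_zero_of_derivative_eq_zero h
    omega
  set A : Finset ℝ := P.roots.toFinset.filter (· ∈ J) with hA
  set B : Finset ℝ := P.roots.toFinset.filter (· ∈ I \ J) with hB
  set S : Finset ℝ := A ∪ B with hS
  have hJI' : J ⊆ I := hJI.trans interior_subset
  have hSI : ∀ x ∈ S, x ∈ I := by
    intro x hx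
    rcases Finset.mem_union.mp hx with hx | hx
    · exact hJI' (Finset.mem_filter.mp hx).2
    · exact (Finset.mem_filter.mp hx).2.1
  have hSroot : ∀ x ∈ S, P.IsRoot x := by
    intro x hx
    rcases Finset.mem_union.mp hx with hx | hx <;>
      exact (mem_roots hP0).mp (Multiset.mem_toFinset.mp (Finset.mem_filter.mp hx).1)
  set t : Finset ℝ := (derivative P).roots.toFinset.filter (· ∈ interior I) with ht
  set C : Finset ℝ := t \ S with hC
  -- Rolle: interleaving gives |S| ≤ |C| + 1
  have hcard : S.card ≤ C.card + 1 := by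
    refine Finset.card_le_diff_of_interleaved fun x hx y hy hxy _ => ?_
    obtain ⟨z, hz1, hz2⟩ := exists_deriv_eq_zero hxy P.continuousOn
      ((hSroot x hx).trans (hSroot y hy).symm)
    refine ⟨z, Finset.mem_filter.mpr ⟨Multiset.mem_toFinset.mpr ((mem_roots hP').mpr ?_), ?_⟩,
      hz1.1, hz1.2⟩
    · rwa [IsRoot, ← P.deriv]
    · have hsub : Set.Ioo x y ⊆ I :=
        Set.Ioo_subset_Icc_self.trans (hI.out (hSI x hx) (hSI y hy))
      exact interior_maximal hsub isOpen_Ioo hz1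
  have hCt : C ⊆ t := Finset.sdiff_subset
  have hdisjAC : Disjoint A C :=
    (Finset.sdiff_disjoint.symm.mono_left (Finset.subset_union_left : A ⊆ S))
  set CJ : Finset ℝ := C.filter (· ∈ J) with hCJ
  set CnJ : Finset ℝ := C.filter (· ∉ J) with hCnJ
  -- LHS computation
  have hNZP : NZ P J = ∑ x ∈ A, P.roots.count x := by
    rw [NZ, card_filter_eq_sum]
  have hNDP : ND P (I \ J) = B.card := by
    rw [ND, hB]; congr 1; ext x; simp [Finset.mem_filter]
  have hsumA : ∑ x ∈ A, P.roots.count x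
      = (∑ x ∈ A, (P.roots.count x - 1)) + A.card := by
    rw [Finset.card_eq_sum_ones, ← Finset.sum_add_distrib]
    refine Finset.sum_congr rfl fun x hx => ?_
    have : 1 ≤ P.roots.count x :=
      Multiset.one_le_count_iff_mem.mpr (Multiset.mem_toFinset.mp (Finset.mem_filter.mp hx).1)
    omega
  -- RHS bound for NZ (derivative P) J
  have hNZ' : (∑ x ∈ A, (P.roots.count x - 1)) + CJ.card ≤ NZ (derivative P) J := by
    have hd : Disjoint A CJ := hdisjAC.mono_right (Finset.filter_subset _ _)
    have h1 : ∑ x ∈ A ∪ CJ, ((derivative P).roots.filter (· ∈ J)).count x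
        ≤ NZ (derivative P) J := by
      rw [NZ]
      exact sum_count_le _ _
    refine le_trans ?_ h1
    rw [Finset.sum_union hd]
    have hcnt : ∀ x ∈ A ∪ CJ, ((derivative P).roots.filter (· ∈ J)).count x
        = (derivative P).roots.count x := by
      intro x hx
      have hxJ : x ∈ J := by
        rcases Finset.mem_union.mp hx with hx | hx
        · exact (Finset.mem_filter.mp hx).2
        · exact (Finset.mem_filter.mp hx).2
      rw [Multiset.count_filter, if_pos hxJ]
    have e1 : ∀ x ∈ A, ((derivative P).roots.filter (· ∈ J)).count x
        = (derivative P).roots.count x := fun x hx =>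
      hcnt x (Finset.mem_union_left _ hx)
    have e2 : ∀ x ∈ CJ, ((derivative P).roots.filter (· ∈ J)).count x
        = (derivative P).roots.count x := fun x hx =>
      hcnt x (Finset.mem_union_right _ hx)
    rw [Finset.sum_congr rfl e1, Finset.sum_congr rfl e2]
    refine add_le_add ?_ ?_
    · refine Finset.sum_le_sum fun x _ => ?_
      rw [count_roots, count_roots]
      exact rootMultiplicity_sub_one_le_derivative_rootMultiplicity P x
    · rw [Finset.card_eq_sum_ones]
      refine Finset.sum_le_sum fun x hx => ?_
      have : x ∈ (derivative P).roots.toFinset :=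
        (Finset.mem_filter.mp (hCt (Finset.mem_filter.mp hx).1)).1
      exact Multiset.one_le_count_iff_mem.mpr (Multiset.mem_toFinset.mp this)
  -- RHS bound for ND (derivative P) (interior I \ J)
  have hND' : CnJ.card ≤ ND (derivative P) (interior I \ J) := by
    rw [ND]
    refine Finset.card_le_card ?_
    intro x hx
    simp only [hCnJ, hC, ht, Finset.mem_filter, Finset.mem_sdiff, Set.mem_diff] at hx ⊢
    exact ⟨hx.1.1.1, hx.1.1.2, hx.2⟩
  -- putting everything together
  have hdisjAB : Disjoint A B := by
    refine Finset.disjoint_filter.mpr fun x _ hxJ hxIJ => hxIJ.2 hxJ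
  have hScard : S.card = A.card + B.card := Finset.card_union_of_disjoint hdisjAB
  have hCcard : CJ.card + CnJ.card = C.card :=
    Finset.card_filter_add_card_filter_not _
  calc NZ P J + ND P (I \ J)
      = (∑ x ∈ A, (P.roots.count x - 1)) + (A.card + B.card) := by
        rw [hNZP, hNDP, hsumA]; ring
    _ ≤ (∑ x ∈ A, (P.roots.count x - 1)) + (C.card + 1) := by
        rw [← hScard]; omega
    _ = ((∑ x ∈ A, (P.roots.count x - 1)) + CJ.card) + CnJ.card + 1 := by
        rw [← hCcard]; ring
    _ ≤ NZ (derivative P) J + ND (derivative P) (interior I \ J) + 1 := by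
        have := hNZ'; have := hND'; omega
end

section
/- Let I_0, I_1, ..., I_m be intervals on the real line satisfying I_k ∩ int(conv(I_0 ∪ ... ∪ I_{k−1})) = ∅ for k = 1, 2, ..., m, and let P be a real polynomial of degree ≥ m. Then for every closed subinterval J of int(I_0) (J may be empty or a single point): N(P;J) + N°(P; I_0∖J) + Σ_{i=1}^m N°(P^{(i)}; I_i) ≤ N(P^{(m)};J) + N°(P^{(m)}; conv(I_0 ∪ ... ∪ I_m)∖J) + m. -/
open Polynomial

lemma NZ_eq (P : Polynomial ℝ) (S : Set ℝ) [DecidableEq ℝ] [∀ z : ℝ, Decidable (z ∈ S)] :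
    NZ P S = Multiset.card (P.roots.filter (· ∈ S)) := by
  unfold NZ; congr!

lemma ND_eq (P : Polynomial ℝ) (S : Set ℝ) [DecidableEq ℝ] [∀ z : ℝ, Decidable (z ∈ S)] :
    ND P S = (P.roots.toFinset.filter (· ∈ S)).card := by
  unfold ND; congr!

lemma NZ_eq_sum (P : Polynomial ℝ) (S : Set ℝ) [DecidableEq ℝ] [∀ z : ℝ, Decidable (z ∈ S)] :
    NZ P S = ∑ z ∈ P.roots.toFinset.filter (· ∈ S), P.roots.count z := by
  rw [NZ_eq]
  rw [← Multiset.toFinset_sum_count_eq (P.roots.filter (· ∈ S)), Multiset.toFinset_filter]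
  apply Finset.sum_congr rfl
  intro z hz
  rw [Multiset.count_filter]
  simp only [Finset.mem_filter] at hz
  simp [hz.2]

lemma NZ_ge (P : Polynomial ℝ) (S : Set ℝ) (T : Finset ℝ) (hT : ∀ y ∈ T, y ∈ S)
    [DecidableEq ℝ] [∀ z : ℝ, Decidable (z ∈ S)] :
    ∑ y ∈ T, P.roots.count y ≤ NZ P S := by
  rw [NZ_eq_sum]
  rw [← Finset.sum_filter_of_ne (p := fun y => y ∈ P.roots.toFinset)
    (fun y hy h => by
      simp only [Multiset.mem_toFinset]
      exact Multiset.count_pos.mp (Nat.pos_of_ne_zero h))]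
  apply Finset.sum_le_sum_of_subset
  intro y hy
  simp only [Finset.mem_filter] at hy ⊢
  exact ⟨hy.2, hT y hy.1⟩

lemma ND_ge (P : Polynomial ℝ) (S : Set ℝ) (T : Finset ℝ) [DecidableEq ℝ]
    [∀ z : ℝ, Decidable (z ∈ S)]
    (hT1 : ∀ y ∈ T, y ∈ P.roots.toFinset) (hT2 : ∀ y ∈ T, y ∈ S) :
    T.card ≤ ND P S := by
  rw [ND_eq]
  apply Finset.card_le_card
  intro y hy
  simp only [Finset.mem_filter]
  exact ⟨hT1 y hy, hT2 y hy⟩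

lemma ND_mono (P : Polynomial ℝ) {S S' : Set ℝ} (h : S ⊆ S') : ND P S ≤ ND P S' := by
  classical
  rw [ND_eq, ND_eq]
  apply Finset.card_le_card
  intro y hy
  simp only [Finset.mem_filter] at hy ⊢
  exact ⟨hy.1, h hy.2⟩

lemma poly_rolle (Q : Polynomial ℝ) {a b : ℝ} (hab : a < b) (ha : Q.eval a = 0)
    (hb : Q.eval b = 0) : ∃ c ∈ Set.Ioo a b, (derivative Q).eval c = 0 :=
  exists_hasDerivAt_eq_zero hab (Q.continuous_aeval.continuousOn) (ha.trans hb.symm)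
    (fun x _ => Q.hasDerivAt x)

lemma rolle_finset (Q : Polynomial ℝ) :
    ∀ (n : ℕ) (Z : Finset ℝ), Z.card = n → (∀ z ∈ Z, Q.eval z = 0) → Z.Nonempty →
    ∃ W : Finset ℝ, W.card + 1 = Z.card ∧ ∀ w ∈ W, (derivative Q).eval w = 0 ∧
      ∃ a ∈ Z, ∃ b ∈ Z, a < w ∧ w < b ∧ ∀ y ∈ Z, ¬ (a < y ∧ y < b) := by
  classical
  intro n
  induction n with
  | zero => intro Z hc _ hne; exact absurd (Finset.card_pos.mpr hne) (by omega)
  | succ n ih =>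
    intro Z hc hroots hne
    rcases Nat.eq_zero_or_pos n with hn | hn
    · exact ⟨∅, by simp [hc, hn], by simp⟩
    · set M := Z.max' hne with hM
      have hMZ : M ∈ Z := Z.max'_mem hne
      set Z₂ := Z.erase M with hZ₂
      have hc₂ : Z₂.card = n := by rw [hZ₂, Finset.card_erase_of_mem hMZ, hc]; omega
      have hne₂ : Z₂.Nonempty := Finset.card_pos.mp (by omega)
      obtain ⟨W₂, hW₂card, hW₂⟩ := ih Z₂ hc₂ (fun z hz => hroots z (Finset.mem_of_mem_erase hz)) hne₂
      set M₂ := Z₂.max' hne₂ with hM₂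
      have hM₂Z₂ : M₂ ∈ Z₂ := Z₂.max'_mem hne₂
      have hM₂Z : M₂ ∈ Z := Finset.mem_of_mem_erase hM₂Z₂
      have hM₂M : M₂ < M :=
        lt_of_le_of_ne (Z.le_max' _ hM₂Z) (Finset.ne_of_mem_erase hM₂Z₂)
      obtain ⟨c, hc_mem, hc_root⟩ := poly_rolle Q hM₂M (hroots _ hM₂Z) (hroots _ hMZ)
      have hcW₂ : c ∉ W₂ := by
        intro hcw
        obtain ⟨_, a, _, b, hbZ₂, _, hwb, _⟩ := hW₂ c hcw
        exact absurd (lt_of_lt_of_le hwb (Z₂.le_max' _ hbZ₂)) (not_lt.mpr hc_mem.1.le)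
      refine ⟨insert c W₂, ?_, ?_⟩
      · rw [Finset.card_insert_of_notMem hcW₂]; omega
      · intro w hw
        rcases Finset.mem_insert.mp hw with rfl | hw₂
        · refine ⟨hc_root, M₂, hM₂Z, M, hMZ, hc_mem.1, hc_mem.2, ?_⟩
          intro y hy ⟨hy1, hy2⟩
          have : y ∈ Z₂ := Finset.mem_erase.mpr ⟨ne_of_lt hy2, hy⟩
          exact absurd (Z₂.le_max' _ this) (not_le.mpr hy1)
        · obtain ⟨hr, a, haZ₂, b, hbZ₂, hwa, hwb, hnot⟩ := hW₂ w hw₂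
          refine ⟨hr, a, Finset.mem_of_mem_erase haZ₂, b, Finset.mem_of_mem_erase hbZ₂,
            hwa, hwb, ?_⟩
          intro y hy ⟨hy1, hy2⟩
          rcases eq_or_ne y M with rfl | hyM
          · exact absurd (lt_of_lt_of_le hy2 (Z.le_max' _ (Finset.mem_of_mem_erase hbZ₂)))
              (lt_irrefl _)
          · exact hnot y (Finset.mem_erase.mpr ⟨hyM, hy⟩) ⟨hy1, hy2⟩

lemma step_lemma (Q : Polynomial ℝ) (hQ' : derivative Q ≠ 0) (A C J : Set ℝ)
    (hA : Convex ℝ A) (hCA : C ∩ interior A = ∅) (hJA : J ⊆ interior A) :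
    NZ Q J + ND Q (A \ J) + ND (derivative Q) C ≤
      NZ (derivative Q) J + ND (derivative Q) (convexHull ℝ (A ∪ C) \ J) + 1 := by
  classical
  have hQ : Q ≠ 0 := fun h => hQ' (by simp [h])
  have hJsubA : J ⊆ A := hJA.trans interior_subset
  have hCJ : ∀ x ∈ C, x ∉ J := fun x hx hxJ =>
    Set.eq_empty_iff_forall_notMem.mp hCA x ⟨hx, hJA hxJ⟩
  have hCint : ∀ x ∈ C, x ∉ interior A := fun x hx hxA =>
    Set.eq_empty_iff_forall_notMem.mp hCA x ⟨hx, hxA⟩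
  set Z : Finset ℝ := Q.roots.toFinset.filter (· ∈ A) with hZdef
  set ZJ : Finset ℝ := Q.roots.toFinset.filter (· ∈ J) with hZJdef
  set CR : Finset ℝ := (derivative Q).roots.toFinset.filter (· ∈ C) with hCRdef
  have hNDC : ND (derivative Q) C = CR.card := ND_eq _ _
  have hZJZ : ZJ ⊆ Z := by
    intro z hz
    simp only [hZJdef, hZdef, Finset.mem_filter] at hz ⊢
    exact ⟨hz.1, hJsubA hz.2⟩
  have hsplit : ND Q (A \ J) + ZJ.card = Z.card := by
    have e2 : Z.filter (fun z => ¬ (z ∈ J)) = Q.roots.toFinset.filter (· ∈ A \ J) := by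
      rw [hZdef, Finset.filter_filter]
      apply Finset.filter_congr
      intro x _
      simp [Set.mem_diff, and_comm]
    have e1 : Z.filter (fun z => z ∈ J) = ZJ := by
      rw [hZdef, Finset.filter_filter, hZJdef]
      exact Finset.filter_congr fun x hx => ⟨fun h => h.2, fun h => ⟨hJsubA h, h⟩⟩
    have := Finset.card_filter_add_card_filter_not (s := Z) (p := fun z => z ∈ J)
    rw [e1, e2] at this
    have hND : ND Q (A \ J) = (Q.roots.toFinset.filter (· ∈ A \ J)).card := ND_eq _ _
    omega
  have hNZQJ : NZ Q J = ∑ z ∈ ZJ, Q.roots.count z := NZ_eq_sum Q J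
  by_cases hZne : Z.Nonempty
  case neg =>
    have hZempty : Z = ∅ := Finset.not_nonempty_iff_eq_empty.mp hZne
    have hZJ0 : ZJ = ∅ := Finset.subset_empty.mp (hZempty ▸ hZJZ)
    have h1 : NZ Q J = 0 := by rw [hNZQJ, hZJ0, Finset.sum_empty]
    have hZc : Z.card = 0 := by rw [hZempty]; rfl
    have hZJc : ZJ.card = 0 := by rw [hZJ0]; rfl
    have h2 : ND Q (A \ J) = 0 := by omega
    have h3 : ND (derivative Q) C ≤ ND (derivative Q) (convexHull ℝ (A ∪ C) \ J) := by
      rw [hNDC]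
      apply ND_ge
      · intro y hy; exact (Finset.mem_filter.mp hy).1
      · intro y hy
        have hyC : y ∈ C := (Finset.mem_filter.mp hy).2
        exact ⟨subset_convexHull ℝ _ (Or.inr hyC), hCJ y hyC⟩
    omega
  case pos =>
    obtain ⟨W, hWcard, hW⟩ := rolle_finset Q Z.card Z rfl
      (fun z hz => by
        have := (Finset.mem_filter.mp hz).1
        rw [Multiset.mem_toFinset, mem_roots hQ] at this
        exact this) hZne
    have hWroot : ∀ w ∈ W, (derivative Q).eval w = 0 := fun w hw => (hW w hw).1
    have hWint : ∀ w ∈ W, w ∈ interior A := by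
      intro w hw
      obtain ⟨_, a, haZ, b, hbZ, haw, hwb, _⟩ := hW w hw
      have haA : a ∈ A := (Finset.mem_filter.mp haZ).2
      have hbA : b ∈ A := (Finset.mem_filter.mp hbZ).2
      have hIoo : Set.Ioo a b ⊆ A := fun x hx =>
        hA.ordConnected.out haA hbA ⟨hx.1.le, hx.2.le⟩
      exact interior_maximal hIoo isOpen_Ioo ⟨haw, hwb⟩
    have hWnotQ : ∀ w ∈ W, Q.eval w ≠ 0 := by
      intro w hw hweval
      obtain ⟨_, a, haZ, b, hbZ, haw, hwb, hnot⟩ := hW w hw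
      have hwA : w ∈ A := interior_subset (hWint w hw)
      have hwZ : w ∈ Z := by
        rw [hZdef, Finset.mem_filter, Multiset.mem_toFinset, mem_roots hQ]
        exact ⟨hweval, hwA⟩
      exact hnot w hwZ ⟨haw, hwb⟩
    set WJ : Finset ℝ := W.filter (· ∈ J) with hWJdef
    set WO : Finset ℝ := W.filter (fun w => ¬ (w ∈ J)) with hWOdef
    have hWsplit : WJ.card + WO.card = W.card :=
      Finset.card_filter_add_card_filter_not _
    have hJcount : (∑ z ∈ ZJ, (derivative Q).roots.count z) + WJ.card ≤ NZ (derivative Q) J := by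
      have hdisj : Disjoint ZJ WJ := by
        rw [Finset.disjoint_left]
        intro z hz hzW
        have : Q.eval z = 0 := by
          have := (Finset.mem_filter.mp hz).1
          rwa [Multiset.mem_toFinset, mem_roots hQ] at this
        exact hWnotQ z (Finset.mem_of_mem_filter z hzW) this
      have hsum : ∑ y ∈ ZJ ∪ WJ, (derivative Q).roots.count y
          = (∑ z ∈ ZJ, (derivative Q).roots.count z) + ∑ w ∈ WJ, (derivative Q).roots.count w :=
        Finset.sum_union hdisj
      have hWJ1 : WJ.card ≤ ∑ w ∈ WJ, (derivative Q).roots.count w := by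
        have := Finset.card_nsmul_le_sum WJ (fun w => (derivative Q).roots.count w) 1
          (fun w hw => by
            rw [Multiset.one_le_count_iff_mem, mem_roots hQ']
            exact hWroot w (Finset.mem_of_mem_filter w hw))
        simpa using this
      have hle : ∑ y ∈ ZJ ∪ WJ, (derivative Q).roots.count y ≤ NZ (derivative Q) J := by
        apply NZ_ge
        intro y hy
        rcases Finset.mem_union.mp hy with h | h
        · exact (Finset.mem_filter.mp h).2
        · exact (Finset.mem_filter.mp h).2
      omega
    have hmult : (∑ z ∈ ZJ, (derivative Q).roots.count z) + ZJ.card = NZ Q J := by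
      have heach : ∀ z ∈ ZJ, Multiset.count z Q.roots
          = Multiset.count z (derivative Q).roots + 1 := by
        intro z hz
        have hzroot : Q.IsRoot z := by
          have := (Finset.mem_filter.mp hz).1
          rwa [Multiset.mem_toFinset, mem_roots hQ] at this
        have hpos : 0 < Q.rootMultiplicity z := (rootMultiplicity_pos hQ).mpr hzroot
        have hder : (derivative Q).rootMultiplicity z = Q.rootMultiplicity z - 1 :=
          derivative_rootMultiplicity_of_root_of_mem_nonZeroDivisors hzroot
            (mem_nonZeroDivisors_of_ne_zero (by exact_mod_cast Nat.pos_iff_ne_zero.mp hpos))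
        rw [count_roots, count_roots, hder]
        omega
      rw [hNZQJ, Finset.sum_congr rfl heach, Finset.sum_add_distrib, Finset.sum_const,
        smul_eq_mul, mul_one]
    have hOcount : WO.card + CR.card ≤ ND (derivative Q) (convexHull ℝ (A ∪ C) \ J) := by
      have hdisj : Disjoint WO CR := by
        rw [Finset.disjoint_left]
        intro w hw hwC
        exact hCint w (Finset.mem_filter.mp hwC).2 (hWint w (Finset.mem_of_mem_filter w hw))
      rw [← Finset.card_union_of_disjoint hdisj]
      apply ND_ge
      · intro y hy
        rcases Finset.mem_union.mp hy with h | h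
        · rw [Multiset.mem_toFinset, mem_roots hQ']
          exact hWroot y (Finset.mem_of_mem_filter y h)
        · exact (Finset.mem_filter.mp h).1
      · intro y hy
        rcases Finset.mem_union.mp hy with h | h
        · refine ⟨subset_convexHull ℝ _ (Or.inl (interior_subset
            (hWint y (Finset.mem_of_mem_filter y h)))), (Finset.mem_filter.mp h).2⟩
        · have hyC : y ∈ C := (Finset.mem_filter.mp h).2
          exact ⟨subset_convexHull ℝ _ (Or.inr hyC), hCJ y hyC⟩
    omega

lemma natDegree_iter_deriv (P : Polynomial ℝ) :
    ∀ k, k ≤ P.natDegree → (derivative^[k] P).natDegree = P.natDegree - k := by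
  intro k
  induction k with
  | zero => simp
  | succ k ih =>
    intro h
    have h1 : (derivative^[k] P).natDegree = P.natDegree - k := ih (by omega)
    have h2 : 0 < (derivative^[k] P).natDegree := by omega
    have h3 := Polynomial.natDegree_eq_of_degree_eq_some (degree_derivative_eq _ h2)
    rw [Function.iterate_succ_apply', h3, h1]
    omega


theorem stmt3 (m : ℕ) (I : ℕ → Set ℝ) (hI : ∀ i ≤ m, (I i).OrdConnected)
    (hseq : ∀ k, 1 ≤ k → k ≤ m →
      I k ∩ interior (convexHull ℝ (⋃ i ∈ Finset.range k, I i)) = ∅)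
    (P : Polynomial ℝ) (hP : (m : WithBot ℕ) ≤ P.degree)
    (J : Set ℝ) (hJ : J.OrdConnected) (hJclosed : IsClosed J)
    (hJI : J ⊆ interior (I 0)) :
    NZ P J + ND P (I 0 \ J) + ∑ i ∈ Finset.Icc 1 m, ND (derivative^[i] P) (I i) ≤
      NZ (derivative^[m] P) J +
        ND (derivative^[m] P) (convexHull ℝ (⋃ i ∈ Finset.range (m + 1), I i) \ J) + m := by
  revert hI hseq hP
  induction m with
  | zero =>
    intro _ _ _
    have h0 : (⋃ i ∈ Finset.range 1, I i) = I 0 := by simp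
    rw [h0]
    simp only [Function.iterate_zero_apply, Finset.Icc_eq_empty (by omega : ¬ (1:ℕ) ≤ 0),
      Finset.sum_empty, add_zero]
    have := ND_mono P (Set.diff_subset_diff_left (subset_convexHull ℝ (I 0)) : I 0 \ J ⊆ _)
    omega
  | succ m ih =>
    intro hI hseq hP
    have hPm : ((m : ℕ) : WithBot ℕ) ≤ P.degree :=
      le_trans (by exact_mod_cast Nat.le_succ m) hP
    have IH := ih (fun i hi => hI i (hi.trans (Nat.le_succ m)))
      (fun k hk1 hk2 => hseq k hk1 (hk2.trans (Nat.le_succ m))) hPm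
    -- degree facts
    have hPne : P ≠ 0 := by
      intro h
      rw [h, degree_zero] at hP
      exact absurd hP (by simp)
    have hdeg : m + 1 ≤ P.natDegree := by
      rw [degree_eq_natDegree hPne] at hP
      exact_mod_cast hP
    have hQ' : derivative (derivative^[m] P) ≠ 0 := by
      intro h
      have h0 := natDegree_eq_zero_of_derivative_eq_zero h
      rw [natDegree_iter_deriv P m (by omega)] at h0
      omega
    -- step lemma
    have hJA : J ⊆ interior (convexHull ℝ (⋃ i ∈ Finset.range (m + 1), I i)) := by
      refine hJI.trans (interior_mono ?_)
      refine le_trans ?_ (subset_convexHull ℝ _)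
      exact Set.subset_biUnion_of_mem (by simp : (0:ℕ) ∈ (Finset.range (m+1) : Finset ℕ))
    have hs := step_lemma (derivative^[m] P) hQ'
      (convexHull ℝ (⋃ i ∈ Finset.range (m + 1), I i)) (I (m + 1)) J
      (convex_convexHull ℝ _) (hseq (m + 1) (by omega) le_rfl) hJA
    have hU : (⋃ i ∈ Finset.range (m + 1 + 1), I i)
        = (⋃ i ∈ Finset.range (m + 1), I i) ∪ I (m + 1) := by
      rw [Finset.range_add_one, Finset.set_biUnion_insert]
      exact Set.union_comm _ _
    have hconv : convexHull ℝ ((convexHull ℝ (⋃ i ∈ Finset.range (m + 1), I i)) ∪ I (m + 1))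
        = convexHull ℝ (⋃ i ∈ Finset.range (m + 1 + 1), I i) := by
      rw [convexHull_convexHull_union_left, hU]
    rw [hconv] at hs
    rw [Finset.sum_Icc_succ_top (by omega : 1 ≤ m + 1),
      Function.iterate_succ_apply' derivative m P]
    omega
end

section
/- Let {(r_i, ν_i)}_{i=1}^M ⊂ ℝ × ℤ_{≥0} be a set of M distinct ordered pairs. Then there exists a unique monic polynomial U_M of minimal degree, with 0 ≤ deg U_M ≤ M, such that U_M^{(ν_i)}(r_i) = 0 for i = 1, 2, ..., M; that is, among all monic polynomials of degree ≤ M satisfying these conditions, there is exactly one of minimal degree. -/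
open Polynomial

private lemma normalize_monic {P : Polynomial ℝ} (hP : P ≠ 0) {M : ℕ} (r : Fin M → ℝ)
    (ν : Fin M → ℕ) (h : ∀ i, (derivative^[ν i] P).eval (r i) = 0) :
    ∃ Q : Polynomial ℝ, Q.Monic ∧ Q.natDegree = P.natDegree ∧
      ∀ i, (derivative^[ν i] Q).eval (r i) = 0 := by
  refine ⟨P * C P.leadingCoeff⁻¹, monic_mul_leadingCoeff_inv hP, ?_, fun i => ?_⟩
  · rw [natDegree_mul_C (inv_ne_zero (leadingCoeff_ne_zero.mpr hP))]
  · rw [mul_comm, iterate_derivative_C_mul, eval_mul, h i, mul_zero]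

private lemma exists_sat (M : ℕ) (r : Fin M → ℝ) (ν : Fin M → ℕ) :
    ∃ P : Polynomial ℝ, P.Monic ∧ P.natDegree ≤ M ∧
      ∀ i, (derivative^[ν i] P).eval (r i) = 0 := by
  haveI : FiniteDimensional ℝ (degreeLT ℝ (M + 1)) :=
    Module.Finite.equiv (degreeLTEquiv ℝ (M + 1)).symm
  let f : degreeLT ℝ (M + 1) →ₗ[ℝ] (Fin M → ℝ) :=
    LinearMap.pi fun i =>
      (Polynomial.leval (r i)) ∘ₗ ((derivative : Module.End ℝ (Polynomial ℝ)) ^ (ν i)) ∘ₗ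
        (degreeLT ℝ (M + 1)).subtype
  have hker : LinearMap.ker f ≠ ⊥ := by
    apply LinearMap.ker_ne_bot_of_finrank_lt
    rw [(degreeLTEquiv ℝ (M + 1)).finrank_eq, Module.finrank_pi, Module.finrank_pi]
    simp
  obtain ⟨p, hpker, hp0⟩ := (Submodule.ne_bot_iff _).mp hker
  have hcond : ∀ i, (derivative^[ν i] (p : Polynomial ℝ)).eval (r i) = 0 := by
    intro i
    have := congrFun (LinearMap.mem_ker.mp hpker) i
    simpa [f, Module.End.pow_apply] using this
  have hpne : (p : Polynomial ℝ) ≠ 0 := fun h => hp0 (Subtype.ext h)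
  obtain ⟨Q, hQm, hQd, hQc⟩ := normalize_monic hpne r ν hcond
  refine ⟨Q, hQm, ?_, hQc⟩
  rw [hQd]
  have := mem_degreeLT.mp p.2
  rw [degree_eq_natDegree hpne] at this
  exact Nat.lt_succ_iff.mp (by exact_mod_cast this)

theorem stmt5 (M : ℕ) (r : Fin M → ℝ) (ν : Fin M → ℕ)
    (hdist : Function.Injective (fun i => (r i, ν i))) :
    ∃! U : Polynomial ℝ,
      U.Monic ∧ U.natDegree ≤ M ∧
      (∀ i, (derivative^[ν i] U).eval (r i) = 0) ∧
      ∀ V : Polynomial ℝ, V.Monic → (∀ i, (derivative^[ν i] V).eval (r i) = 0) →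
        U.natDegree ≤ V.natDegree := by
  classical
  obtain ⟨P, hPm, hPdeg, hPcond⟩ := exists_sat M r ν
  set S := {d : ℕ | ∃ V : Polynomial ℝ, V.Monic ∧
    (∀ i, (derivative^[ν i] V).eval (r i) = 0) ∧ V.natDegree = d} with hSdef
  have hSne : S.Nonempty := ⟨P.natDegree, P, hPm, hPcond, rfl⟩
  obtain ⟨U, hUm, hUcond, hUd⟩ := Nat.sInf_mem hSne
  have hmin : ∀ V : Polynomial ℝ, V.Monic →
      (∀ i, (derivative^[ν i] V).eval (r i) = 0) → U.natDegree ≤ V.natDegree := by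
    intro V hV hVc
    rw [hUd]
    exact Nat.sInf_le ⟨V, hV, hVc, rfl⟩
  have hUM : U.natDegree ≤ M := le_trans (hmin P hPm hPcond) hPdeg
  refine ⟨U, ⟨hUm, hUM, hUcond, hmin⟩, ?_⟩
  rintro W ⟨hWm, hWM, hWcond, hWmin⟩
  by_contra hne
  have hdeq : W.natDegree = U.natDegree := le_antisymm (hWmin U hUm hUcond) (hmin W hWm hWcond)
  have hQne : W - U ≠ 0 := sub_ne_zero.mpr hne
  have hdegeq : W.degree = U.degree := by
    rw [degree_eq_natDegree hWm.ne_zero, degree_eq_natDegree hUm.ne_zero, hdeq]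
  have hdeg : (W - U).degree < W.degree :=
    degree_sub_lt hdegeq hWm.ne_zero (by rw [hWm.leadingCoeff, hUm.leadingCoeff])
  have hcond : ∀ i, (derivative^[ν i] (W - U)).eval (r i) = 0 := by
    intro i
    rw [iterate_derivative_sub, eval_sub, hWcond i, hUcond i, sub_zero]
  obtain ⟨Q, hQm, hQd, hQc⟩ := normalize_monic hQne r ν hcond
  have h1 : U.natDegree ≤ Q.natDegree := hmin Q hQm hQc
  have h2 : (W - U).natDegree < W.natDegree := natDegree_lt_natDegree hQne hdeg
  omega
end

section
/- Let {(r_i, ν_i)}_{i=1}^M ⊂ ℝ × ℤ_{≥0} be a set of M distinct ordered pairs with ν_1 ≤ ν_2 ≤ ... ≤ ν_M, and let U_M be the unique monic polynomial of minimal degree (0 ≤ deg U_M ≤ M) with U_M^{(ν_i)}(r_i) = 0 for i = 1,...,M. If the intervals I_k = conv({r_i : ν_i = k}), k = 0, 1, ..., ν_M, satisfy I_k ∩ int(conv(I_0 ∪ ... ∪ I_{k−1})) = ∅ for k = 1, ..., ν_M, then deg U_M = min(𝔍_M) − 1, where 𝔍_M = {i : 1 ≤ i ≤ M and ν_i ≥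 i} ∪ {M+1}. -/
open Polynomial

private lemma exists_poly_aux (n : ℕ) (r : ℕ → ℝ) (ν : ℕ → ℕ) :
    ∃ p : Polynomial ℝ, p ≠ 0 ∧ p.degree < (n + 1 : ℕ) ∧
      ∀ i ∈ Finset.Icc 1 n, (derivative^[ν i] p).eval (r i) = 0 := by
  classical
  let Φ : degreeLT ℝ (n + 1) →ₗ[ℝ] (Fin n → ℝ) :=
    LinearMap.pi fun j =>
      ((leval (r ((j : ℕ) + 1))).comp
        ((derivative : Polynomial ℝ →ₗ[ℝ] Polynomial ℝ) ^ (ν ((j : ℕ) + 1)))).comp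
        (Submodule.subtype _)
  have hker : LinearMap.ker Φ ≠ ⊥ := by
    intro h
    have hinj : Function.Injective Φ := LinearMap.ker_eq_bot.mp h
    have h1 : Module.finrank ℝ (degreeLT ℝ (n + 1)) = n + 1 := by
      rw [(degreeLTEquiv ℝ (n + 1)).finrank_eq, Module.finrank_fin_fun]
    have h2 := LinearMap.finrank_le_finrank_of_injective hinj
    rw [h1, Module.finrank_fin_fun] at h2
    omega
  obtain ⟨x, hxker, hx0⟩ := (Submodule.ne_bot_iff _).mp hker
  refine ⟨x.1, by simpa using hx0, mem_degreeLT.mp x.2, ?_⟩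
  intro i hi
  simp only [Finset.mem_Icc] at hi
  have hcf := congrFun (LinearMap.mem_ker.mp hxker) ⟨i - 1, by omega⟩
  simp only [Φ, LinearMap.pi_apply, LinearMap.comp_apply, Submodule.coe_subtype,
    Module.End.pow_apply, leval_apply, Pi.zero_apply] at hcf
  have hi1 : i - 1 + 1 = i := by omega
  rwa [hi1] at hcf

private lemma rolle_finset_s6 (p : Polynomial ℝ) :
    ∀ n : ℕ, ∀ S : Finset ℝ, S.card = n → (∀ x ∈ S, p.eval x = 0) →
      ∃ T : Finset ℝ, n ≤ T.card + 1 ∧ (∀ x ∈ T, p.derivative.eval x = 0) ∧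
        ∀ x ∈ T, ∃ a ∈ S, ∃ b ∈ S, a < x ∧ x < b := by
  intro n
  induction n with
  | zero => intro S _ _; exact ⟨∅, by simp, by simp, by simp⟩
  | succ n ih =>
    intro S hcard hroot
    have hne : S.Nonempty := by rw [← Finset.card_pos, hcard]; omega
    set a := S.min' hne with ha
    have haS : a ∈ S := S.min'_mem hne
    set S₂ := S.erase a with hS₂
    have hS₂card : S₂.card = n := by
      rw [hS₂, Finset.card_erase_of_mem haS, hcard]
      omega
    by_cases hn : n = 0
    · exact ⟨∅, by omega, by simp, by simp⟩
    · have hS₂ne : S₂.Nonempty := by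
        rw [← Finset.card_pos, hS₂card]; omega
      set b := S₂.min' hS₂ne with hb
      have hbS₂ : b ∈ S₂ := S₂.min'_mem hS₂ne
      have hbS : b ∈ S := Finset.mem_of_mem_erase hbS₂
      have hab : a < b :=
        lt_of_le_of_ne (S.min'_le b hbS) (Ne.symm (Finset.ne_of_mem_erase hbS₂))
      obtain ⟨c, hc, hc0⟩ := exists_deriv_eq_zero hab
        ((p.continuous).continuousOn)
        (by rw [hroot a haS, hroot b hbS])
      rw [Polynomial.deriv] at hc0
      obtain ⟨T₂, hT₂card, hT₂root, hT₂loc⟩ :=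
        ih S₂ hS₂card (fun x hx => hroot x (Finset.mem_of_mem_erase hx))
      have hcT₂ : c ∉ T₂ := by
        intro h
        obtain ⟨a', ha', b', hb', h1, h2⟩ := hT₂loc c h
        have hba' := S₂.min'_le a' ha'
        have hcb := hc.2
        linarith
      refine ⟨insert c T₂, ?_, ?_, ?_⟩
      · rw [Finset.card_insert_of_notMem hcT₂]; omega
      · intro x hx
        rcases Finset.mem_insert.mp hx with h | h
        · subst h; exact hc0
        · exact hT₂root x h
      · intro x hx
        rcases Finset.mem_insert.mp hx with h | h
        · subst h; exact ⟨a, haS, b, hbS, hc.1, hc.2⟩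
        · obtain ⟨a', ha', b', hb', h1, h2⟩ := hT₂loc x h
          exact ⟨a', Finset.mem_of_mem_erase ha', b', Finset.mem_of_mem_erase hb', h1, h2⟩

theorem stmt6 (M : ℕ) (hM : 1 ≤ M) (r : ℕ → ℝ) (ν : ℕ → ℕ)
    (hdist : ∀ i ∈ Finset.Icc 1 M, ∀ j ∈ Finset.Icc 1 M,
      r i = r j → ν i = ν j → i = j)
    (hmono : ∀ i j, 1 ≤ i → i ≤ j → j ≤ M → ν i ≤ ν j)
    (U : Polynomial ℝ)
    (hU : U.Monic ∧ U.natDegree ≤ M ∧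
      (∀ i ∈ Finset.Icc 1 M, (derivative^[ν i] U).eval (r i) = 0) ∧
      ∀ V : Polynomial ℝ, V.Monic →
        (∀ i ∈ Finset.Icc 1 M, (derivative^[ν i] V).eval (r i) = 0) →
        U.natDegree ≤ V.natDegree)
    (hseq : ∀ k, 1 ≤ k → k ≤ ν M →
      convexHull ℝ {x : ℝ | ∃ i ∈ Finset.Icc 1 M, ν i = k ∧ r i = x} ∩
        interior (convexHull ℝ (⋃ l ∈ Finset.range k,
          convexHull ℝ {x : ℝ | ∃ i ∈ Finset.Icc 1 M, ν i = l ∧ r i = x})) = ∅) :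
    U.natDegree =
      (insert (M + 1) ((Finset.Icc 1 M).filter (fun i => i ≤ ν i))).min'
        (Finset.insert_nonempty _ _) - 1 := by
  classical
  obtain ⟨hUm, hUdeg, hUroots, hUmin⟩ := hU
  set m := (insert (M + 1) ((Finset.Icc 1 M).filter (fun i => i ≤ ν i))).min'
      (Finset.insert_nonempty _ _) with hmdef
  have hm1 : 1 ≤ m := by
    apply Finset.le_min'
    intro y hy
    rcases Finset.mem_insert.mp hy with h | h
    · omega
    · exact (Finset.mem_Icc.mp (Finset.mem_filter.mp h).1).1
  have hmM : m ≤ M + 1 := Finset.min'_le _ _ (Finset.mem_insert_self _ _)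
  have hlt : ∀ i, 1 ≤ i → i ≤ M → i < m → ν i < i := by
    intro i h1 h2 h3
    by_contra h
    push_neg at h
    have hmem : i ∈ insert (M + 1) ((Finset.Icc 1 M).filter (fun i => i ≤ ν i)) :=
      Finset.mem_insert_of_mem (Finset.mem_filter.mpr ⟨Finset.mem_Icc.mpr ⟨h1, h2⟩, h⟩)
    have := Finset.min'_le _ i hmem
    omega
  -- Upper bound
  have hub : U.natDegree ≤ m - 1 := by
    obtain ⟨p, hp0, hpdeg, hproots⟩ := exists_poly_aux (m - 1) r ν
    have hm1' : m - 1 + 1 = m := by omega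
    rw [hm1'] at hpdeg
    have hpnd : p.natDegree < m := (natDegree_lt_iff_degree_lt hp0).mpr hpdeg
    set V := C p.leadingCoeff⁻¹ * p with hV
    have hlc : p.leadingCoeff⁻¹ ≠ 0 := inv_ne_zero (leadingCoeff_ne_zero.mpr hp0)
    have hVnd : V.natDegree = p.natDegree := natDegree_C_mul hlc
    have hVm : V.Monic := by rw [hV, mul_comm]; exact monic_mul_leadingCoeff_inv hp0
    have hVroots : ∀ i ∈ Finset.Icc 1 M, (derivative^[ν i] V).eval (r i) = 0 := by
      intro i hi
      rcases Finset.mem_Icc.mp hi with ⟨h1, h2⟩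
      by_cases him : i ≤ m - 1
      · rw [hV, iterate_derivative_C_mul, eval_mul,
          hproots i (Finset.mem_Icc.mpr ⟨h1, him⟩), mul_zero]
      · have hmi : m ≤ i := by omega
        have hmν : m ≤ ν m := by
          have hmm : m ∈ insert (M + 1) ((Finset.Icc 1 M).filter (fun i => i ≤ ν i)) := by
            rw [hmdef]; exact Finset.min'_mem _ _
          rcases Finset.mem_insert.mp hmm with h | h
          · omega
          · exact (Finset.mem_filter.mp h).2
        have hmνi : m ≤ ν i := le_trans hmν (hmono m i hm1 hmi h2)
        have hVlt : V.natDegree < ν i := by omega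
        rw [iterate_derivative_eq_zero hVlt, eval_zero]
    have := hUmin V hVm hVroots
    omega
  -- Lower bound: root-counting induction
  have key : ∀ k : ℕ, ∃ S : Finset ℝ,
      (∀ x ∈ S, (derivative^[k] U).eval x = 0) ∧
      ((S : Set ℝ) ⊆ convexHull ℝ (⋃ l ∈ Finset.range (k + 1),
        convexHull ℝ {x : ℝ | ∃ i ∈ Finset.Icc 1 M, ν i = l ∧ r i = x})) ∧
      ((Finset.Icc 1 (m - 1)).filter (fun i => ν i ≤ k)).card ≤ S.card + k := by
    intro k
    induction k with
    | zero =>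
      refine ⟨((Finset.Icc 1 (m - 1)).filter (fun i => ν i = 0)).image r, ?_, ?_, ?_⟩
      · intro x hx
        obtain ⟨i, hi, hri⟩ := Finset.mem_image.mp hx
        obtain ⟨hi1, hi2⟩ := Finset.mem_filter.mp hi
        obtain ⟨h1, h2⟩ := Finset.mem_Icc.mp hi1
        have := hUroots i (Finset.mem_Icc.mpr ⟨h1, by omega⟩)
        rw [hi2] at this
        simpa [← hri] using this
      · intro x hx
        simp only [Finset.coe_image, Set.mem_image, Finset.mem_coe] at hx
        obtain ⟨i, hi, hri⟩ := hx
        obtain ⟨hi1, hi2⟩ := Finset.mem_filter.mp hi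
        obtain ⟨h1, h2⟩ := Finset.mem_Icc.mp hi1
        apply subset_convexHull
        exact Set.mem_iUnion₂.mpr ⟨0, Finset.mem_range.mpr (by omega),
          subset_convexHull ℝ _ ⟨i, Finset.mem_Icc.mpr ⟨h1, by omega⟩, hi2, hri⟩⟩
      · have hfe : (Finset.Icc 1 (m - 1)).filter (fun i => ν i ≤ 0)
            = (Finset.Icc 1 (m - 1)).filter (fun i => ν i = 0) :=
          Finset.filter_congr (fun i _ => by omega)
        rw [hfe, Finset.card_image_of_injOn, add_zero]
        intro i hi j hj hr
        simp only [Finset.coe_filter, Set.mem_setOf_eq, Finset.mem_Icc] at hi hj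
        exact hdist i (Finset.mem_Icc.mpr ⟨hi.1.1, by omega⟩)
          j (Finset.mem_Icc.mpr ⟨hj.1.1, by omega⟩) hr (by omega)
    | succ k ih =>
      obtain ⟨S, hSroot, hSsub, hScard⟩ := ih
      obtain ⟨T, hTcard, hTroot, hTloc⟩ := rolle_finset_s6 (derivative^[k] U) S.card S rfl hSroot
      have hTint : (T : Set ℝ) ⊆ interior (convexHull ℝ (⋃ l ∈ Finset.range (k + 1),
          convexHull ℝ {x : ℝ | ∃ i ∈ Finset.Icc 1 M, ν i = l ∧ r i = x})) := by
        intro x hx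
        obtain ⟨aa, haS, bb, hbS, h1, h2⟩ := hTloc x hx
        have hIoo : Set.Ioo aa bb ⊆ interior (convexHull ℝ (⋃ l ∈ Finset.range (k + 1),
            convexHull ℝ {x : ℝ | ∃ i ∈ Finset.Icc 1 M, ν i = l ∧ r i = x})) := by
          rw [(isOpen_Ioo).subset_interior_iff]
          refine subset_trans Set.Ioo_subset_Icc_self ?_
          rw [← segment_eq_Icc (le_of_lt (lt_trans h1 h2))]
          exact (convex_convexHull ℝ _).segment_subset (hSsub haS) (hSsub hbS)
        exact hIoo ⟨h1, h2⟩
      set N := ((Finset.Icc 1 (m - 1)).filter (fun i => ν i = k + 1)).image r with hN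
      have hdisj : Disjoint T N := by
        rw [Finset.disjoint_left]
        intro x hxT hxN
        obtain ⟨i, hi, hri⟩ := Finset.mem_image.mp hxN
        obtain ⟨hi1, hi2⟩ := Finset.mem_filter.mp hi
        obtain ⟨h1, h2⟩ := Finset.mem_Icc.mp hi1
        have hkM : k + 1 ≤ ν M := by
          rw [← hi2]; exact hmono i M h1 (by omega) le_rfl
        have hemp := hseq (k + 1) (by omega) hkM
        have hx1 : x ∈ convexHull ℝ {x : ℝ | ∃ i ∈ Finset.Icc 1 M, ν i = k + 1 ∧ r i = x} :=
          subset_convexHull ℝ _ ⟨i, Finset.mem_Icc.mpr ⟨h1, by omega⟩, hi2, hri⟩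
        exact Set.eq_empty_iff_forall_notMem.mp hemp x ⟨hx1, hTint hxT⟩
      refine ⟨T ∪ N, ?_, ?_, ?_⟩
      · intro x hx
        rcases Finset.mem_union.mp hx with h | h
        · rw [Function.iterate_succ_apply']
          exact hTroot x h
        · obtain ⟨i, hi, hri⟩ := Finset.mem_image.mp h
          obtain ⟨hi1, hi2⟩ := Finset.mem_filter.mp hi
          obtain ⟨h1, h2⟩ := Finset.mem_Icc.mp hi1
          have := hUroots i (Finset.mem_Icc.mpr ⟨h1, by omega⟩)
          rw [hi2] at this
          rwa [← hri]
      · intro x hx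
        rcases Finset.mem_union.mp (by exact_mod_cast hx) with h | h
        · have hx1 := hTint h
          have hx2 := interior_subset hx1
          refine convexHull_mono ?_ hx2
          intro y hy
          obtain ⟨l, hl, hyl⟩ := Set.mem_iUnion₂.mp hy
          exact Set.mem_iUnion₂.mpr ⟨l, Finset.mem_range.mpr
            (by have := Finset.mem_range.mp hl; omega), hyl⟩
        · obtain ⟨i, hi, hri⟩ := Finset.mem_image.mp h
          obtain ⟨hi1, hi2⟩ := Finset.mem_filter.mp hi
          obtain ⟨h1, h2⟩ := Finset.mem_Icc.mp hi1
          apply subset_convexHull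
          exact Set.mem_iUnion₂.mpr ⟨k + 1, Finset.mem_range.mpr (by omega),
            subset_convexHull ℝ _ ⟨i, Finset.mem_Icc.mpr ⟨h1, by omega⟩, hi2, hri⟩⟩
      · have hNcard : N.card = ((Finset.Icc 1 (m - 1)).filter (fun i => ν i = k + 1)).card := by
          rw [hN, Finset.card_image_of_injOn]
          intro i hi j hj hr
          simp only [Finset.coe_filter, Set.mem_setOf_eq, Finset.mem_Icc] at hi hj
          exact hdist i (Finset.mem_Icc.mpr ⟨hi.1.1, by omega⟩)
            j (Finset.mem_Icc.mpr ⟨hj.1.1, by omega⟩) hr (by omega)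
        have hsplit : (Finset.Icc 1 (m - 1)).filter (fun i => ν i ≤ k + 1)
            = (Finset.Icc 1 (m - 1)).filter (fun i => ν i ≤ k)
              ∪ (Finset.Icc 1 (m - 1)).filter (fun i => ν i = k + 1) := by
          rw [← Finset.filter_or]
          exact Finset.filter_congr (fun i _ => by omega)
        have hdisj2 : Disjoint ((Finset.Icc 1 (m - 1)).filter (fun i => ν i ≤ k))
            ((Finset.Icc 1 (m - 1)).filter (fun i => ν i = k + 1)) := by
          rw [Finset.disjoint_left]
          intro i hi1 hi2
          have := (Finset.mem_filter.mp hi1).2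
          have := (Finset.mem_filter.mp hi2).2
          omega
        rw [hsplit, Finset.card_union_of_disjoint hdisj2,
          Finset.card_union_of_disjoint hdisj, hNcard]
        omega
  have hlb : ¬ (U.natDegree < m - 1) := by
    intro hd
    obtain ⟨S, hSroot, hSsub, hScard⟩ := key U.natDegree
    have hsub : Finset.Icc 1 (U.natDegree + 1)
        ⊆ (Finset.Icc 1 (m - 1)).filter (fun i => ν i ≤ U.natDegree) := by
      intro i hi
      obtain ⟨h1, h2⟩ := Finset.mem_Icc.mp hi
      have hνi := hlt i h1 (by omega) (by omega)
      exact Finset.mem_filter.mpr ⟨Finset.mem_Icc.mpr ⟨h1, by omega⟩, by omega⟩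
    have hcard1 := Finset.card_le_card hsub
    rw [Nat.card_Icc] at hcard1
    have hSne : S.Nonempty := by rw [← Finset.card_pos]; omega
    obtain ⟨x, hxS⟩ := hSne
    have hx := hSroot x hxS
    have hdeg0 : (derivative^[U.natDegree] U).natDegree ≤ 0 := by
      have := natDegree_iterate_derivative U U.natDegree
      omega
    rw [eq_C_of_natDegree_le_zero hdeg0, eval_C] at hx
    have hcoeff : (derivative^[U.natDegree] U).coeff 0 = ((U.natDegree).factorial : ℝ) := by
      rw [coeff_iterate_derivative]
      simp [Nat.descFactorial_self, hUm.coeff_natDegree]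
    rw [hcoeff] at hx
    exact (Nat.cast_ne_zero.mpr (Nat.factorial_ne_zero _)) hx
  omega
end

section
/- Let {P_n} be the monic orthogonal polynomials with respect to μ, let K_n(x,y) = Σ_{k=0}^n P_k(x)P_k(y)/‖P_k‖²_μ be the associated kernel, and let K_n^{(0,k)}(x,y) = ∂^k K_n(x,y)/∂y^k. Then for every n, the Sobolev orthogonal polynomial S_n satisfies the polynomial identity S_n(x) = P_n(x) − Σ_{(j,k) ∈ I₊} λ_{j,k} · S_n^{(k)}(c_j) · K_{n−1}^{(0,k)}(x, c_j). -/
open MeasureTheory Polynomial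

-- `K_{n-1}^{(0,k)}(·, c)` as a polynomial in the first variable:
-- `Σ_{l=0}^{n-1} P_l(·) · P_l^{(k)}(c) / ‖P_l‖²_μ`.
noncomputable def kernelD (μ : Measure ℝ) (P : ℕ → Polynomial ℝ) (n k : ℕ) (c : ℝ) :
    Polynomial ℝ :=
  ∑ l ∈ Finset.range n,
    C (((derivative^[k] (P l)).eval c) / (∫ x, ((P l).eval x) ^ 2 ∂μ)) * P l

/-! ### Auxiliary lemmas -/

lemma iterDer_add (k : ℕ) (p q : Polynomial ℝ) :
    derivative^[k] (p + q) = derivative^[k] p + derivative^[k] q := by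
  induction k generalizing p q with
  | zero => rfl
  | succ k ih => simp [Function.iterate_succ_apply, derivative_add, ih]

lemma aux_integrable (μ : Measure ℝ) (hmom : ∀ k : ℕ, Integrable (fun x => x ^ k) μ)
    (p : Polynomial ℝ) : Integrable (fun x => p.eval x) μ := by
  have h : (fun x : ℝ => p.eval x)
      = fun x => ∑ i ∈ Finset.range (p.natDegree + 1), p.coeff i * x ^ i := by
    funext x; exact p.eval_eq_sum_range x
  rw [h]
  exact integrable_finset_sum _ fun i _ => (hmom i).const_mul _

lemma aux_int_mul (μ : Measure ℝ) (hmom : ∀ k : ℕ, Integrable (fun x => x ^ k) μ)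
    (p q : Polynomial ℝ) : Integrable (fun x => p.eval x * q.eval x) μ := by
  simpa only [eval_mul] using aux_integrable μ hmom (p * q)

lemma aux_sq_pos (μ : Measure ℝ) (hmom : ∀ k : ℕ, Integrable (fun x => x ^ k) μ)
    (hsupp : (mSupport μ).Infinite) (p : Polynomial ℝ) (hp : p ≠ 0) :
    0 < ∫ x, (p.eval x) ^ 2 ∂μ := by
  have hint : Integrable (fun x => (p.eval x) ^ 2) μ := by
    simpa [sq] using aux_int_mul μ hmom p p
  rw [integral_pos_iff_support_of_nonneg (fun x => sq_nonneg _) hint]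
  obtain ⟨x0, hx0⟩ := (hsupp.diff (Polynomial.finite_setOf_isRoot hp)).nonempty
  have hx0s : x0 ∈ mSupport μ := hx0.1
  have hx0r : p.eval x0 ≠ 0 := hx0.2
  have hUopen : IsOpen {x : ℝ | p.eval x ≠ 0} := by
    have : {x : ℝ | p.eval x ≠ 0} = (fun x => p.eval x) ⁻¹' ({0}ᶜ) := rfl
    rw [this]
    exact isOpen_compl_singleton.preimage p.continuous
  have hU : {x : ℝ | p.eval x ≠ 0} ∈ nhds x0 := hUopen.mem_nhds hx0r
  refine lt_of_lt_of_le (hx0s _ hU) (measure_mono ?_)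
  intro x hx
  simp only [Function.mem_support]
  exact pow_ne_zero _ hx

section OPS

variable (μ : Measure ℝ) (hmom : ∀ k : ℕ, Integrable (fun x => x ^ k) μ)
  (P : ℕ → Polynomial ℝ)
  (hP : ∀ n, (P n).Monic ∧ (P n).natDegree = n ∧
      ∀ k < n, ∫ x, (P n).eval x * x ^ k ∂μ = 0)

include hmom hP

/-- `P l` is orthogonal to any polynomial of degree `< l`. -/
lemma aux_orth (l : ℕ) (q : Polynomial ℝ) (hq : q.degree < (l : ℕ)) :
    ∫ x, (P l).eval x * q.eval x ∂μ = 0 := by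
  by_cases hq0 : q = 0
  · simp [hq0]
  have hql : q.natDegree < l := (natDegree_lt_iff_degree_lt hq0).2 hq
  have h : ∀ x : ℝ, (P l).eval x * q.eval x
      = ∑ i ∈ Finset.range l, q.coeff i * ((P l).eval x * x ^ i) := by
    intro x
    rw [eval_eq_sum_range' hql, Finset.mul_sum]
    exact Finset.sum_congr rfl fun i _ => by ring
  rw [show (fun x => (P l).eval x * q.eval x)
      = fun x => ∑ i ∈ Finset.range l, q.coeff i * ((P l).eval x * x ^ i) from funext h]
  rw [integral_finset_sum _ fun i _ => by
    have h' := (aux_int_mul μ hmom (P l) (X ^ i)).const_mul (q.coeff i)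
    simp only [eval_pow, eval_X] at h'
    exact h']
  refine Finset.sum_eq_zero fun i hi => ?_
  rw [integral_const_mul, (hP l).2.2 i (Finset.mem_range.mp hi), mul_zero]

lemma aux_orth' (l m : ℕ) (hlm : l ≠ m) :
    ∫ x, (P l).eval x * (P m).eval x ∂μ = 0 := by
  have hdeg : ∀ t, (P t).degree = (t : ℕ) := fun t => by
    rw [degree_eq_natDegree (hP t).1.ne_zero, (hP t).2.1]
  rcases lt_or_gt_of_ne hlm with h | h
  · rw [show (fun x => (P l).eval x * (P m).eval x)
        = fun x => (P m).eval x * (P l).eval x from funext fun x => mul_comm _ _]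
    exact aux_orth μ hmom P hP m (P l) (by rw [hdeg l]; exact_mod_cast h)
  · exact aux_orth μ hmom P hP l (P m) (by rw [hdeg m]; exact_mod_cast h)

lemma aux_norm_pos (hsupp : (mSupport μ).Infinite) (l : ℕ) :
    0 < ∫ x, ((P l).eval x) ^ 2 ∂μ :=
  aux_sq_pos μ hmom hsupp (P l) (hP l).1.ne_zero

/-- Reproducing property on the basis polynomials. -/
lemma aux_repro_P (hsupp : (mSupport μ).Infinite) (n k : ℕ) (c : ℝ) (m : ℕ) (hm : m < n) :
    ∫ x, (kernelD μ P n k c).eval x * (P m).eval x ∂μ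
      = (derivative^[k] (P m)).eval c := by
  have hkev : ∀ x : ℝ, (kernelD μ P n k c).eval x * (P m).eval x
      = ∑ l ∈ Finset.range n,
          ((derivative^[k] (P l)).eval c / ∫ x, ((P l).eval x) ^ 2 ∂μ)
            * ((P l).eval x * (P m).eval x) := by
    intro x
    rw [kernelD, eval_finset_sum, Finset.sum_mul]
    exact Finset.sum_congr rfl fun l _ => by rw [eval_mul, eval_C]; ring
  rw [show (fun x => (kernelD μ P n k c).eval x * (P m).eval x) = _ from funext hkev]
  rw [integral_finset_sum _ fun l _ => (aux_int_mul μ hmom (P l) (P m)).const_mul _]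
  rw [Finset.sum_eq_single m
    (fun l _ hlm => by rw [integral_const_mul, aux_orth' μ hmom P hP l m hlm, mul_zero])
    (fun hmem => absurd (Finset.mem_range.mpr hm) hmem)]
  rw [integral_const_mul]
  have hsq : ∫ x, (P m).eval x * (P m).eval x ∂μ = ∫ x, ((P m).eval x) ^ 2 ∂μ := by
    simp [sq]
  rw [hsq, div_mul_cancel₀ _ (aux_norm_pos μ hmom P hP hsupp m).ne']

/-- Reproducing property of the kernel. -/
lemma aux_repro (hsupp : (mSupport μ).Infinite) (n k : ℕ) (c : ℝ) :
    ∀ m ≤ n, ∀ q : Polynomial ℝ, q.degree < (m : ℕ) →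
      ∫ x, (kernelD μ P n k c).eval x * q.eval x ∂μ = (derivative^[k] q).eval c := by
  intro m
  induction m with
  | zero =>
    intro _ q hq
    have : q = 0 := degree_eq_bot.mp (Nat.WithBot.lt_zero_iff.mp (by exact_mod_cast hq))
    simp [this]
  | succ m ih =>
    intro hmn q hq
    by_cases hq0 : q = 0
    · simp [hq0]
    have hqnd : q.natDegree ≤ m :=
      Nat.lt_succ_iff.mp ((natDegree_lt_iff_degree_lt hq0).2 hq)
    set a := q.coeff m with ha
    set r := q - C a * P m with hr
    have hPm : (P m).degree = (m : ℕ) := by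
      rw [degree_eq_natDegree (hP m).1.ne_zero, (hP m).2.1]
    have hrdeg : r.degree < (m : ℕ) := by
      by_cases hqm : q.natDegree = m
      · have hqd : q.degree = (m : ℕ) := by rw [degree_eq_natDegree hq0, hqm]
        have hane : a ≠ 0 := by
          rw [ha, ← hqm]; exact leadingCoeff_ne_zero.mpr hq0
        have hCP : (C a * P m).degree = (m : ℕ) := by
          rw [degree_mul, degree_C hane, hPm, zero_add]
        have := degree_sub_lt (hqd.trans hCP.symm) hq0
          (by rw [leadingCoeff, hqm, ← ha, leadingCoeff_mul, leadingCoeff_C,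
                (hP m).1.leadingCoeff, mul_one])
        rw [hr]; rw [hqd] at this; exact this
      · have hq' : q.natDegree < m := lt_of_le_of_ne hqnd hqm
        have : a = 0 := coeff_eq_zero_of_natDegree_lt hq'
        rw [hr, this, map_zero, zero_mul, sub_zero]
        exact (natDegree_lt_iff_degree_lt hq0).1 hq'
    have hqsplit : q = r + C a * P m := by rw [hr]; ring
    have hint1 : Integrable (fun x => (kernelD μ P n k c).eval x * r.eval x) μ :=
      aux_int_mul μ hmom _ _
    have hint2 : Integrable (fun x => (kernelD μ P n k c).eval x * (C a * P m).eval x) μ :=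
      aux_int_mul μ hmom _ _
    have hsplit : (fun x => (kernelD μ P n k c).eval x * q.eval x)
        = fun x => (kernelD μ P n k c).eval x * r.eval x
            + (kernelD μ P n k c).eval x * (C a * P m).eval x := by
      funext x
      conv_lhs => rw [hqsplit]
      rw [eval_add]; ring
    rw [hsplit, integral_add hint1 hint2]
    have h1 : ∫ x, (kernelD μ P n k c).eval x * r.eval x ∂μ = (derivative^[k] r).eval c :=
      ih (le_of_lt hmn) r hrdeg
    have h2 : ∫ x, (kernelD μ P n k c).eval x * (C a * P m).eval x ∂μ
        = a * (derivative^[k] (P m)).eval c := by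
      have : (fun x => (kernelD μ P n k c).eval x * (C a * P m).eval x)
          = fun x => a * ((kernelD μ P n k c).eval x * (P m).eval x) := by
        funext x; rw [eval_mul, eval_C]; ring
      rw [this, integral_const_mul, aux_repro_P μ hmom P hP hsupp n k c m hmn]
    rw [h1, h2]
    conv_rhs => rw [hqsplit]
    rw [iterDer_add, eval_add, iterate_derivative_C_mul, eval_mul, eval_C]

end OPS

open Classical in
theorem stmt16 (μ : Measure ℝ) [IsFiniteMeasure μ]
    (hmom : ∀ k : ℕ, Integrable (fun x => x ^ k) μ)
    (hsupp : (mSupport μ).Infinite)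
    {N : ℕ} (c : Fin N → ℝ) (d : Fin N → ℕ) (lam : Fin N → ℕ → ℝ)
    (hdmono : Monotone d)
    (hcdist : Function.Injective c)
    (hcout : ∀ j, c j ∉ interior (convexHull ℝ (mSupport μ)))
    (hlam : ∀ j k, k ≤ d j → 0 ≤ lam j k)
    (hlamd : ∀ j, 0 < lam j (d j))
    (P : ℕ → Polynomial ℝ)
    (hP : ∀ n, (P n).Monic ∧ (P n).natDegree = n ∧
      ∀ k < n, ∫ x, (P n).eval x * x ^ k ∂μ = 0)
    (n : ℕ) (S : Polynomial ℝ)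
    (hS : S.Monic ∧ S.natDegree = n ∧ ∀ k < n, sobolevIP μ c d lam (X ^ k) S = 0) :
    S = P n - ∑ j : Fin N,
      ∑ k ∈ (Finset.range (d j + 1)).filter (fun k => 0 < lam j k),
        C (lam j k * ((derivative^[k] S).eval (c j))) * kernelD μ P n k (c j) := by
  set T : Polynomial ℝ := P n - ∑ j : Fin N,
      ∑ k ∈ (Finset.range (d j + 1)).filter (fun k => 0 < lam j k),
        C (lam j k * ((derivative^[k] S).eval (c j))) * kernelD μ P n k (c j) with hT
  -- Step 1: `∫ S x^m` in terms of the Sobolev data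
  have key1 : ∀ m < n, ∫ x, S.eval x * x ^ m ∂μ
      = - ∑ j : Fin N, ∑ k ∈ Finset.range (d j + 1),
          lam j k * ((derivative^[k] (X ^ m : Polynomial ℝ)).eval (c j))
            * ((derivative^[k] S).eval (c j)) := by
    intro m hm
    have h0 := hS.2.2 m hm
    rw [sobolevIP] at h0
    have heq : (∫ x, (X ^ m : Polynomial ℝ).eval x * S.eval x ∂μ)
        = ∫ x, S.eval x * x ^ m ∂μ := by
      congr 1; funext x; simp [mul_comm]
    rw [heq] at h0
    linarith
  -- Step 2: `∫ T x^m` equals the same quantity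
  have key2 : ∀ m < n, ∫ x, T.eval x * x ^ m ∂μ
      = - ∑ j : Fin N, ∑ k ∈ Finset.range (d j + 1),
          lam j k * ((derivative^[k] (X ^ m : Polynomial ℝ)).eval (c j))
            * ((derivative^[k] S).eval (c j)) := by
    intro m hm
    have hTev : (fun x => T.eval x * x ^ m)
        = fun x => (P n).eval x * x ^ m
            - ∑ j : Fin N, ∑ k ∈ (Finset.range (d j + 1)).filter (fun k => 0 < lam j k),
                (lam j k * ((derivative^[k] S).eval (c j)))
                  * ((kernelD μ P n k (c j)).eval x * x ^ m) := by
      funext x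
      rw [hT, eval_sub, eval_finset_sum, sub_mul, Finset.sum_mul]
      congr 1
      refine Finset.sum_congr rfl fun j _ => ?_
      rw [eval_finset_sum, Finset.sum_mul]
      refine Finset.sum_congr rfl fun k _ => ?_
      rw [eval_mul, eval_C]; ring
    rw [hTev]
    have hintP : Integrable (fun x => (P n).eval x * x ^ m) μ := by
      have h' := aux_int_mul μ hmom (P n) (X ^ m)
      simp only [eval_pow, eval_X] at h'
      exact h'
    have hintK : ∀ (j : Fin N) (k : ℕ),
        Integrable (fun x => (lam j k * ((derivative^[k] S).eval (c j)))
          * ((kernelD μ P n k (c j)).eval x * x ^ m)) μ := fun j k => by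
      refine Integrable.const_mul ?_ _
      have h' := aux_int_mul μ hmom (kernelD μ P n k (c j)) (X ^ m)
      simp only [eval_pow, eval_X] at h'
      exact h'
    have hintSum : Integrable (fun x => ∑ j : Fin N,
        ∑ k ∈ (Finset.range (d j + 1)).filter (fun k => 0 < lam j k),
          (lam j k * ((derivative^[k] S).eval (c j)))
            * ((kernelD μ P n k (c j)).eval x * x ^ m)) μ :=
      integrable_finset_sum _ fun j _ => integrable_finset_sum _ fun k _ => hintK j k
    rw [integral_sub hintP hintSum, (hP n).2.2 m hm, zero_sub,
      integral_finset_sum _ fun j _ => integrable_finset_sum _ fun k _ => hintK j k]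
    rw [neg_inj]
    refine Finset.sum_congr rfl fun j _ => ?_
    rw [integral_finset_sum _ fun k _ => hintK j k]
    have hrepro : ∀ k : ℕ, ∫ x, (kernelD μ P n k (c j)).eval x * x ^ m ∂μ
        = (derivative^[k] (X ^ m : Polynomial ℝ)).eval (c j) := by
      intro k
      have := aux_repro μ hmom P hP hsupp n k (c j) n le_rfl (X ^ m)
        (by rw [degree_X_pow]; exact_mod_cast hm)
      simp only [eval_pow, eval_X] at this
      exact this
    calc ∑ k ∈ (Finset.range (d j + 1)).filter (fun k => 0 < lam j k),
          ∫ x, (lam j k * ((derivative^[k] S).eval (c j)))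
            * ((kernelD μ P n k (c j)).eval x * x ^ m) ∂μ
        = ∑ k ∈ (Finset.range (d j + 1)).filter (fun k => 0 < lam j k),
          lam j k * ((derivative^[k] (X ^ m : Polynomial ℝ)).eval (c j))
            * ((derivative^[k] S).eval (c j)) := by
          refine Finset.sum_congr rfl fun k _ => ?_
          rw [integral_const_mul, hrepro k]; ring
      _ = ∑ k ∈ Finset.range (d j + 1),
          lam j k * ((derivative^[k] (X ^ m : Polynomial ℝ)).eval (c j))
            * ((derivative^[k] S).eval (c j)) := by
          rw [Finset.sum_filter]
          refine Finset.sum_congr rfl fun k hk => ?_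
          by_cases hpos : 0 < lam j k
          · simp [hpos]
          · have : lam j k = 0 :=
              le_antisymm (not_lt.mp hpos) (hlam j k (Nat.lt_succ_iff.mp (Finset.mem_range.mp hk)))
            simp [hpos, this]
  -- Step 3: R := S - T has degree < n
  set R : Polynomial ℝ := S - T with hR
  have hRmem : R ∈ degreeLT ℝ n := by
    have hSP : S - P n ∈ degreeLT ℝ n := by
      rw [mem_degreeLT]
      have hSd : S.degree = (n : ℕ) := by rw [degree_eq_natDegree hS.1.ne_zero, hS.2.1]
      have hPd : (P n).degree = (n : ℕ) := by
        rw [degree_eq_natDegree (hP n).1.ne_zero, (hP n).2.1]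
      have := degree_sub_lt (hSd.trans hPd.symm) hS.1.ne_zero
        (by rw [hS.1.leadingCoeff, (hP n).1.leadingCoeff])
      rw [hSd] at this; exact this
    have hker : ∀ (k : ℕ) (c' : ℝ), kernelD μ P n k c' ∈ degreeLT ℝ n := by
      intro k c'
      rw [kernelD]
      refine Submodule.sum_mem _ fun l hl => ?_
      rw [mem_degreeLT, show C _ * P l = _ • P l from (smul_eq_C_mul _).symm]
      refine lt_of_le_of_lt (degree_smul_le _ _) ?_
      rw [degree_eq_natDegree (hP l).1.ne_zero, (hP l).2.1]
      exact_mod_cast Finset.mem_range.mp hl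
    have hRsum : R = (S - P n) + ∑ j : Fin N,
        ∑ k ∈ (Finset.range (d j + 1)).filter (fun k => 0 < lam j k),
          C (lam j k * ((derivative^[k] S).eval (c j))) * kernelD μ P n k (c j) := by
      rw [hR, hT]; ring
    rw [hRsum]
    refine Submodule.add_mem _ hSP (Submodule.sum_mem _ fun j _ => Submodule.sum_mem _ fun k _ => ?_)
    rw [show C _ * kernelD μ P n k (c j) = _ • kernelD μ P n k (c j) from (smul_eq_C_mul _).symm]
    exact Submodule.smul_mem _ _ (hker k (c j))
  have hRdeg : R.degree < (n : ℕ) := mem_degreeLT.mp hRmem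
  -- Step 4: R is μ-orthogonal to x^m for m < n
  have hRint : ∀ m < n, ∫ x, R.eval x * x ^ m ∂μ = 0 := by
    intro m hm
    have hsub : (fun x => R.eval x * x ^ m)
        = fun x => S.eval x * x ^ m - T.eval x * x ^ m := by
      funext x; rw [hR, eval_sub]; ring
    have hi1 := aux_int_mul μ hmom S (X ^ m)
    have hi2 := aux_int_mul μ hmom T (X ^ m)
    simp only [eval_pow, eval_X] at hi1 hi2
    rw [hsub, integral_sub hi1 hi2, key1 m hm, key2 m hm, sub_self]
  -- Step 5: conclude R = 0
  have hR0 : R = 0 := by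
    by_contra hR0
    have hpos : 0 < ∫ x, (R.eval x) ^ 2 ∂μ := aux_sq_pos μ hmom hsupp R hR0
    have hnd : R.natDegree < n := (natDegree_lt_iff_degree_lt hR0).2 hRdeg
    have hzero : ∫ x, (R.eval x) ^ 2 ∂μ = 0 := by
      have hev : (fun x => (R.eval x) ^ 2)
          = fun x => ∑ i ∈ Finset.range n, R.coeff i * (R.eval x * x ^ i) := by
        funext x
        rw [sq]
        nth_rewrite 2 [eval_eq_sum_range' hnd x]
        rw [Finset.mul_sum]
        exact Finset.sum_congr rfl fun i _ => by ring
      rw [hev, integral_finset_sum _ fun i _ => by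
        have h' := (aux_int_mul μ hmom R (X ^ i)).const_mul (R.coeff i)
        simp only [eval_pow, eval_X] at h'
        exact h']
      refine Finset.sum_eq_zero fun i hi => ?_
      rw [integral_const_mul, hRint i (Finset.mem_range.mp hi), mul_zero]
    exact absurd hzero hpos.ne'
  exact sub_eq_zero.mp hR0
end
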